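/- arXiv:2010.10751 — 4 statements merged into one kernel-verified Lean document; each statement's English description precedes it below -/
import Mathlib

section
/- Let (S, d) be a complete separable metric space, C ⊆ S a closed subset, (ε_n) a sequence of positive reals, and ν a measure in M(S \ C). Suppose X_n and Y_n are S-valued random elements such that ε_n^{-1} P(X_n ∈ ·) → ν(·) in M(S \ C), and for every δ > 0 and γ > 0 one has limsup_n ε_n^{-1} P(X_n ∈ (S \ C)^{-γ}, d(X_n, Y_n) ≥ δ) = 0 and limsup_n ε_n^{-1} P(Y_n ∈ (S \ C)^{-γ}, d(X_n, Y_n) ≥ δ) = 0. Then ε_n^{-1} P(Y_n ∈ ·) → ν(·) in M(S \ C). -/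
/-!
If `Yₙ ∈ F` and `d(Xₙ, Yₙ) < δ`, then `Xₙ` lies in the closed `δ`-thickening `F_δ`, which is
still bounded away from `C`; otherwise `(Xₙ, Yₙ)` lies in the exceptional event, which is
negligible at scale `εₙ`. Hence `limsup εₙ⁻¹ P(Yₙ ∈ F) ≤ ν(F_δ)` for small `δ`, and `ν(F_δ) ↓ ν(F)`
because `ν` is finite on `F_δ`. Dually, for open `G` the sets `G^{-δ}` increase to `G`.
-/

open MeasureTheory Filter Set Topology Metric

open scoped ENNReal

section Transfer

variable {Ω : Type*} [MeasurableSpace Ω] (μ : Measure Ω) (c : ℕ → ℝ≥0∞) {A B E : ℕ → Set Ω}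

lemma ENNReal.tendsto_nhds_zero_of_limsup_eq_zero {ι : Type*} {l : Filter ι} {u : ι → ℝ≥0∞}
    (hu : limsup u l = 0) : Tendsto u l (𝓝 0) :=
  tendsto_of_le_liminf_of_limsup_le zero_le hu.le

lemma measure_div_le_add_of_subset_union (h : ∀ n, A n ⊆ B n ∪ E n) (n : ℕ) :
    μ (A n) / c n ≤ μ (B n) / c n + μ (E n) / c n := by
  rw [← ENNReal.add_div]
  gcongr
  exact (measure_mono (h n)).trans (measure_union_le _ _)

lemma limsup_measure_div_le_of_subset_union (h : ∀ n, A n ⊆ B n ∪ E n)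
    (hE : limsup (fun n => μ (E n) / c n) atTop = 0) :
    limsup (fun n => μ (A n) / c n) atTop ≤ limsup (fun n => μ (B n) / c n) atTop :=
  (limsup_le_limsup (.of_forall (measure_div_le_add_of_subset_union μ c h))).trans_eq
    (ENNReal.limsup_add_of_right_tendsto_zero
      (ENNReal.tendsto_nhds_zero_of_limsup_eq_zero hE) _)

lemma liminf_measure_div_le_of_subset_union (h : ∀ n, A n ⊆ B n ∪ E n)
    (hE : limsup (fun n => μ (E n) / c n) atTop = 0) :
    liminf (fun n => μ (A n) / c n) atTop ≤ liminf (fun n => μ (B n) / c n) atTop :=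
  (liminf_le_liminf (.of_forall (measure_div_le_add_of_subset_union μ c h))).trans_eq
    (ENNReal.liminf_add_of_right_tendsto_zero
      (ENNReal.tendsto_nhds_zero_of_limsup_eq_zero hE) _)

end Transfer

section Geometry

variable {S : Type*} [MetricSpace S]

def IsBoundedAwayFrom (A C : Set S) : Prop :=
  ∃ r > 0, ∀ x ∈ A, r ≤ infDist x C

lemma sub_le_infDist_of_mem_thickening {A C : Set S} {r δ : ℝ} {x : S}
    (hA : ∀ y ∈ A, r ≤ infDist y C) (hx : x ∈ thickening δ A) : r - δ ≤ infDist x C := by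
  obtain ⟨y, hy, hxy⟩ := mem_thickening_iff.mp hx
  have := infDist_le_infDist_add_dist (s := C) (x := y) (y := x)
  linarith [hA y hy, dist_comm x y]

lemma cthickening_subset_setOf_half_le_infDist {A C : Set S} {r δ : ℝ}
    (hA : ∀ y ∈ A, r ≤ infDist y C) (hδ : δ < r / 2) :
    cthickening δ A ⊆ {x | r / 2 ≤ infDist x C} := by
  intro x hx
  show r / 2 ≤ infDist x C
  rcases le_or_gt r 0 with hr | hr
  · linarith [infDist_nonneg (x := x) (s := C)]
  have := sub_le_infDist_of_mem_thickening hA (cthickening_subset_thickening' (half_pos hr) hδ A hx)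
  linarith

lemma IsOpen.eq_iUnion_compl_cthickening {G : Set S} (hG : IsOpen G) :
    G = ⋃ k : ℕ, (cthickening (1 / (k + 1 : ℝ)) Gᶜ)ᶜ := by
  rw [← compl_iInter,
    ← biInter_range (f := fun k : ℕ => 1 / (k + 1 : ℝ)) (g := fun δ => cthickening δ Gᶜ),
    ← closure_eq_iInter_cthickening', hG.isClosed_compl.closure_eq, compl_compl]
  intro ε hε
  obtain ⟨k, hk⟩ := exists_nat_one_div_lt hε
  exact ⟨_, mem_range_self k, Nat.one_div_pos_of_nat, hk.le⟩

variable {Ω : Type*} {C : Set S} {δ γ : ℝ} {f g : Ω → S}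

lemma preimage_subset_preimage_cthickening_union {F : Set S} (hF : ∀ y ∈ F, γ < infDist y C) :
    g ⁻¹' F ⊆ f ⁻¹' cthickening δ F ∪ {ω | γ < infDist (g ω) C ∧ δ ≤ dist (f ω) (g ω)} := by
  intro ω hω
  by_cases hfg : dist (f ω) (g ω) < δ
  · exact .inl (mem_cthickening_of_dist_le _ _ _ _ hω hfg.le)
  · exact .inr ⟨hF _ hω, not_lt.mp hfg⟩

lemma preimage_compl_cthickening_subset_union {G : Set S} (hG : ∀ x ∈ G, γ < infDist x C) :
    f ⁻¹' (cthickening δ Gᶜ)ᶜ ⊆ g ⁻¹' G ∪ {ω | γ < infDist (f ω) C ∧ δ ≤ dist (f ω) (g ω)} := by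
  intro ω hω
  by_cases hfg : dist (f ω) (g ω) < δ
  · exact .inl (not_not.mp fun hg => hω (mem_cthickening_of_dist_le _ _ _ _ hg hfg.le))
  · exact .inr ⟨hG _ (compl_subset_comm.mp (self_subset_cthickening _) hω), not_lt.mp hfg⟩

end Geometry

section AsymptoticEquivalence

variable {S : Type*} [MetricSpace S] [MeasurableSpace S] {Ω : Type*} [MeasurableSpace Ω]
  (μ : Measure Ω) (ν : Measure S) (C : Set S) (c : ℕ → ℝ≥0∞) (X Y : ℕ → Ω → S)

theorem limsup_measure_preimage_le_of_asymptoticEquiv [BorelSpace S]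
    (hν : ∀ r : ℝ, 0 < r → ν {x | r ≤ infDist x C} < ⊤)
    (hupperX : ∀ F : Set S, IsClosed F → IsBoundedAwayFrom F C →
      limsup (fun n => μ (X n ⁻¹' F) / c n) atTop ≤ ν F)
    (hYX : ∀ δ γ : ℝ, 0 < δ → 0 < γ →
      limsup (fun n => μ {ω | γ < infDist (Y n ω) C ∧ δ ≤ dist (X n ω) (Y n ω)} / c n) atTop = 0)
    {F : Set S} (hF : IsClosed F) (hFC : IsBoundedAwayFrom F C) :
    limsup (fun n => μ (Y n ⁻¹' F) / c n) atTop ≤ ν F := by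
  obtain ⟨r, hr, hFr⟩ := hFC
  have hFr' : ∀ y ∈ F, r / 2 < infDist y C := fun y hy => by linarith [hFr y hy]
  have hbound : ∀ δ ∈ Ioo 0 (r / 2),
      limsup (fun n => μ (Y n ⁻¹' F) / c n) atTop ≤ ν (cthickening δ F) := by
    rintro δ ⟨hδ, hδr⟩
    calc limsup (fun n => μ (Y n ⁻¹' F) / c n) atTop
        ≤ limsup (fun n => μ (X n ⁻¹' cthickening δ F) / c n) atTop :=
          limsup_measure_div_le_of_subset_union μ c
            (fun _ => preimage_subset_preimage_cthickening_union hFr') (hYX δ _ hδ (half_pos hr))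
      _ ≤ ν (cthickening δ F) :=
          hupperX _ isClosed_cthickening
            ⟨r / 2, half_pos hr, cthickening_subset_setOf_half_le_infDist hFr hδr⟩
  have hfin : ∃ R > 0, ν (cthickening R F) ≠ ∞ :=
    ⟨r / 4, by positivity, ((measure_mono (cthickening_subset_setOf_half_le_infDist hFr
      (by linarith))).trans_lt (hν _ (half_pos hr))).ne⟩
  exact ge_of_tendsto ((tendsto_measure_cthickening_of_isClosed hfin hF).mono_left
    nhdsWithin_le_nhds) (eventually_mem_set.mpr (Ioo_mem_nhdsGT (half_pos hr)) |>.mono hbound)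

theorem le_liminf_measure_preimage_of_asymptoticEquiv
    (hlowerX : ∀ G : Set S, IsOpen G → IsBoundedAwayFrom G C →
      ν G ≤ liminf (fun n => μ (X n ⁻¹' G) / c n) atTop)
    (hXY : ∀ δ γ : ℝ, 0 < δ → 0 < γ →
      limsup (fun n => μ {ω | γ < infDist (X n ω) C ∧ δ ≤ dist (X n ω) (Y n ω)} / c n) atTop = 0)
    {G : Set S} (hG : IsOpen G) (hGC : IsBoundedAwayFrom G C) :
    ν G ≤ liminf (fun n => μ (Y n ⁻¹' G) / c n) atTop := by
  obtain ⟨r, hr, hGr⟩ := hGC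
  set K : ℕ → Set S := fun k => (cthickening (1 / (k + 1 : ℝ)) Gᶜ)ᶜ
  have hKG : ∀ k, K k ⊆ G := fun k => compl_subset_comm.mp (self_subset_cthickening _)
  have hK : Monotone K := fun k l hkl =>
    compl_subset_compl.mpr (cthickening_mono (Nat.one_div_le_one_div hkl) _)
  calc ν G = ν (⋃ k, K k) := congrArg ν hG.eq_iUnion_compl_cthickening
    _ = ⨆ k, ν (K k) := hK.measure_iUnion
    _ ≤ _ := iSup_le fun k =>
      calc ν (K k) ≤ liminf (fun n => μ (X n ⁻¹' K k) / c n) atTop :=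
            hlowerX _ isClosed_cthickening.isOpen_compl ⟨r, hr, fun x hx => hGr x (hKG k hx)⟩
        _ ≤ liminf (fun n => μ (Y n ⁻¹' G) / c n) atTop :=
            liminf_measure_div_le_of_subset_union μ c
              (fun _ => preimage_compl_cthickening_subset_union
                fun x hx => half_lt_self hr |>.trans_le (hGr x hx))
              (hXY _ _ Nat.one_div_pos_of_nat (half_pos hr))

end AsymptoticEquivalence

theorem mConvergence_of_asymptotic_equivalence_general
    {S : Type*} [MetricSpace S]
    [MeasurableSpace S] [BorelSpace S]
    (C : Set S)
    (ε : ℕ → ℝ)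
    (ν : Measure S) (hν : ∀ r : ℝ, 0 < r → ν {x | r ≤ Metric.infDist x C} < ⊤)
    {Ω : Type*} [MeasurableSpace Ω] (μ : Measure Ω)
    (X Y : ℕ → Ω → S)
    (hupperX : ∀ F : Set S, IsClosed F → (∃ r > 0, ∀ x ∈ F, r ≤ Metric.infDist x C) →
      Filter.limsup (fun n => μ (X n ⁻¹' F) / ENNReal.ofReal (ε n)) atTop ≤ ν F)
    (hlowerX : ∀ G : Set S, IsOpen G → (∃ r > 0, ∀ x ∈ G, r ≤ Metric.infDist x C) →
      ν G ≤ Filter.liminf (fun n => μ (X n ⁻¹' G) / ENNReal.ofReal (ε n)) atTop)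
    (hXY : ∀ δ γ : ℝ, 0 < δ → 0 < γ →
      Filter.limsup (fun n =>
        μ {ω | γ < Metric.infDist (X n ω) C ∧ δ ≤ dist (X n ω) (Y n ω)} /
          ENNReal.ofReal (ε n)) atTop = 0)
    (hYX : ∀ δ γ : ℝ, 0 < δ → 0 < γ →
      Filter.limsup (fun n =>
        μ {ω | γ < Metric.infDist (Y n ω) C ∧ δ ≤ dist (X n ω) (Y n ω)} /
          ENNReal.ofReal (ε n)) atTop = 0) :
    (∀ F : Set S, IsClosed F → (∃ r > 0, ∀ x ∈ F, r ≤ Metric.infDist x C) →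
      Filter.limsup (fun n => μ (Y n ⁻¹' F) / ENNReal.ofReal (ε n)) atTop ≤ ν F) ∧
    (∀ G : Set S, IsOpen G → (∃ r > 0, ∀ x ∈ G, r ≤ Metric.infDist x C) →
      ν G ≤ Filter.liminf (fun n => μ (Y n ⁻¹' G) / ENNReal.ofReal (ε n)) atTop) :=
  ⟨fun _ hF hFC => limsup_measure_preimage_le_of_asymptoticEquiv μ ν C _ X Y hν hupperX hYX hF hFC,
    fun _ hG hGC => le_liminf_measure_preimage_of_asymptoticEquiv μ ν C _ X Y hlowerX hXY hG hGC⟩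

/-- **M-convergence transfer along asymptotic equivalence** (Lemma 2.2 / `lem: asymptotic
equivalence`).  Let `(S, d)` be a complete separable metric space, `C ⊆ S` closed, `ε n > 0`,
and `ν` a measure in `M(S \ C)` (finite outside every enlargement of `C`).  If
`εₙ⁻¹ P(Xₙ ∈ ·) → ν` in `M(S \ C)` (expressed via the closed/open set characterization of
M-convergence, for sets bounded away from `C`), and `Xₙ`, `Yₙ` are asymptotically equivalent
with respect to `εₙ` and `C`, then `εₙ⁻¹ P(Yₙ ∈ ·) → ν` in `M(S \ C)` as well.
Here `(S \ C)^{-γ} = {x : infDist x C > γ}`. -/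
theorem mConvergence_of_asymptotic_equivalence
    {S : Type*} [MetricSpace S] [CompleteSpace S] [TopologicalSpace.SeparableSpace S]
    [MeasurableSpace S] [BorelSpace S]
    (C : Set S) (hC : IsClosed C)
    (ε : ℕ → ℝ) (hε : ∀ n, 0 < ε n)
    (ν : Measure S) (hν : ∀ r : ℝ, 0 < r → ν {x | r ≤ Metric.infDist x C} < ⊤)
    {Ω : Type*} [MeasurableSpace Ω] (μ : Measure Ω) [IsProbabilityMeasure μ]
    (X Y : ℕ → Ω → S) (hX : ∀ n, Measurable (X n)) (hY : ∀ n, Measurable (Y n))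
    (hupperX : ∀ F : Set S, IsClosed F → (∃ r > 0, ∀ x ∈ F, r ≤ Metric.infDist x C) →
      Filter.limsup (fun n => μ (X n ⁻¹' F) / ENNReal.ofReal (ε n)) atTop ≤ ν F)
    (hlowerX : ∀ G : Set S, IsOpen G → (∃ r > 0, ∀ x ∈ G, r ≤ Metric.infDist x C) →
      ν G ≤ Filter.liminf (fun n => μ (X n ⁻¹' G) / ENNReal.ofReal (ε n)) atTop)
    (hXY : ∀ δ γ : ℝ, 0 < δ → 0 < γ →
      Filter.limsup (fun n =>
        μ {ω | γ < Metric.infDist (X n ω) C ∧ δ ≤ dist (X n ω) (Y n ω)} /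
          ENNReal.ofReal (ε n)) atTop = 0)
    (hYX : ∀ δ γ : ℝ, 0 < δ → 0 < γ →
      Filter.limsup (fun n =>
        μ {ω | γ < Metric.infDist (Y n ω) C ∧ δ ≤ dist (X n ω) (Y n ω)} /
          ENNReal.ofReal (ε n)) atTop = 0) :
    (∀ F : Set S, IsClosed F → (∃ r > 0, ∀ x ∈ F, r ≤ Metric.infDist x C) →
      Filter.limsup (fun n => μ (Y n ⁻¹' F) / ENNReal.ofReal (ε n)) atTop ≤ ν F) ∧
    (∀ G : Set S, IsOpen G → (∃ r > 0, ∀ x ∈ G, r ≤ Metric.infDist x C) →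
      ν G ≤ Filter.liminf (fun n => μ (Y n ⁻¹' G) / ENNReal.ofReal (ε n)) atTop) :=
  mConvergence_of_asymptotic_equivalence_general C ε ν hν μ X Y hupperX hlowerX hXY hYX
end

section
/- Suppose there exist intervals I_1 = (a_0 − δ, a_0 + δ) and I_2 = (b_1, b_2), a σ-finite measure ν_0 with a_0 in its support, and a constant c_0 > 0 such that P((A_1, B_1) ∈ D_1 × D_2) ≥ c_0 ν_0(D_1 ∩ I_1)·|D_2 ∩ I_2| for all Borel sets D_1, D_2 ⊆ ℝ. Then for x_0 = 0 there exist ε > 0 and θ > 0 such that the transition kernel P(x,E) = P(A_1 x + B_1 ∈ E) satisfies P(x,E) ≥ θ |E ∩ E_0| for all x ∈ B_ε(0) and Borel E, where E_0 = (b_1 + ε(|a_0−δ| ∨ |a_0+δ|), b_2 − ε(|a_0−δ| ∨ |a_0+δ|)), which is nonempty provided ε < (b_2−b_1)/(2(|a_0−δ| ∨ |a_0+δ|)). One may take θ = c_0 ν_0(I_1) > 0. -/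
/-!
The rectangle bound extends, by Besicovitch differentiation, to the measure inequality
`c₀ • (ν₀|_D ⊗ Leb|_{I₂}) ≤ law(A₁, B₁)` for any `D ⊆ I₁` of finite positive measure.
Evaluating it on `{(a, b) | a x + b ∈ E}` and slicing in `a`: for `a ∈ D` and `|x| < ε` the
shift `|a x| < ε (|a₀−δ| ∨ |a₀+δ|)` moves `E ∩ E₀` inside `I₂`, so each slice has Lebesgue
measure at least `|E ∩ E₀|`.
-/

open MeasureTheory Set Metric
open scoped ENNReal

namespace MeasureTheory.Measure

section Besicovitch

variable {β : Type*} [MetricSpace β] [MeasurableSpace β] [BorelSpace β]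
  [SecondCountableTopology β] [HasBesicovitchCovering β]

/-- By Besicovitch differentiation, `dπ/dσ ≥ 1` holds `σ`-a.e. -/
theorem le_of_forall_closedBall_le {σ π : Measure β} [IsFiniteMeasure σ]
    [IsLocallyFiniteMeasure π] (h : ∀ z r, σ (closedBall z r) ≤ π (closedBall z r)) :
    σ ≤ π := by
  have hpos : ∀ᵐ z ∂σ, ∀ r > 0, σ (closedBall z r) ≠ 0 := by
    filter_upwards [support_mem_ae] with z hz r hr
    exact ((mem_support_iff_forall z).1 hz _ (closedBall_mem_nhds z hr)).ne'
  have hderiv : ∀ᵐ z ∂σ, 1 ≤ π.rnDeriv σ z := by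
    filter_upwards [Besicovitch.ae_tendsto_rnDeriv π σ, hpos] with z hlim hz
    refine ge_of_tendsto hlim ?_
    filter_upwards [self_mem_nhdsWithin] with r hr
    rw [ENNReal.le_div_iff_mul_le (Or.inl (hz r hr)) (Or.inl (measure_ne_top _ _)), one_mul]
    exact h z r
  refine Measure.le_iff.2 fun s hs => ?_
  calc σ s = ∫⁻ _ in s, 1 ∂σ := (setLIntegral_one s).symm
    _ ≤ ∫⁻ z in s, π.rnDeriv σ z ∂σ := lintegral_mono_ae (ae_restrict_of_ae hderiv)
    _ = σ.withDensity (π.rnDeriv σ) s := (withDensity_apply _ hs).symm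
    _ ≤ π s := Measure.le_iff'.1 (withDensity_rnDeriv_le π σ) s

end Besicovitch

section FiniteDimensional

variable {E F : Type*} [NormedAddCommGroup E] [NormedSpace ℝ E] [FiniteDimensional ℝ E]
  [MeasurableSpace E] [BorelSpace E] [NormedAddCommGroup F] [NormedSpace ℝ F]
  [FiniteDimensional ℝ F] [MeasurableSpace F] [BorelSpace F]

theorem le_of_forall_prod_le {σ π : Measure (E × F)} [IsFiniteMeasure σ]
    [IsLocallyFiniteMeasure π]
    (h : ∀ s t, MeasurableSet s → MeasurableSet t → σ (s ×ˢ t) ≤ π (s ×ˢ t)) : σ ≤ π :=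
  le_of_forall_closedBall_le fun z r => by
    rw [← closedBall_prod_same]
    exact h _ _ measurableSet_closedBall measurableSet_closedBall

theorem smul_prod_restrict_le {ρ : Measure (E × F)} [IsFiniteMeasure ρ] {ν : Measure E}
    {κ : Measure F} [SFinite κ] {I₁ D : Set E} {I₂ : Set F} {c : ℝ} (hc : 0 ≤ c)
    (hD : MeasurableSet D) (hDI : D ⊆ I₁) (hνD : ν D ≠ ∞) (hκ : κ I₂ ≠ ∞)
    (h : ∀ s t, MeasurableSet s → MeasurableSet t →
      c * (ν (s ∩ I₁)).toReal * (κ (t ∩ I₂)).toReal ≤ (ρ (s ×ˢ t)).toReal) :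
    ENNReal.ofReal c • (ν.restrict D).prod (κ.restrict I₂) ≤ ρ := by
  have : IsFiniteMeasure (ν.restrict D) := isFiniteMeasure_restrict.2 hνD
  have : IsFiniteMeasure (κ.restrict I₂) := isFiniteMeasure_restrict.2 hκ
  have : IsFiniteMeasure (ENNReal.ofReal c • (ν.restrict D).prod (κ.restrict I₂)) :=
    ⟨by rw [smul_apply, smul_eq_mul]; finiteness⟩
  refine le_of_forall_prod_le fun s t hs ht => ?_
  have hsD : (s ∩ D) ∩ I₁ = s ∩ D := inter_eq_left.2 (inter_subset_right.trans hDI)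
  have hrect := h (s ∩ D) t (hs.inter hD) ht
  rw [hsD, mul_assoc, ← ENNReal.toReal_ofReal hc, ← ENNReal.toReal_mul, ← ENNReal.toReal_mul,
    ENNReal.toReal_le_toReal (by finiteness) (measure_ne_top _ _)] at hrect
  calc (ENNReal.ofReal c • (ν.restrict D).prod (κ.restrict I₂)) (s ×ˢ t)
      = ENNReal.ofReal c * (ν (s ∩ D) * κ (t ∩ I₂)) := by
        rw [smul_apply, smul_eq_mul, prod_prod, restrict_apply hs, restrict_apply ht]
    _ ≤ ρ ((s ∩ D) ×ˢ t) := hrect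
    _ ≤ ρ (s ×ˢ t) := measure_mono (Set.prod_mono inter_subset_left subset_rfl)

end FiniteDimensional

end MeasureTheory.Measure

theorem abs_le_max_abs_sub_abs_add (a δ : ℝ) : |δ| ≤ max |a - δ| |a + δ| := by
  rw [le_max_iff]
  by_contra! h
  obtain ⟨h₁, h₂⟩ := abs_lt.1 h.1
  obtain ⟨h₃, h₄⟩ := abs_lt.1 h.2
  rcases abs_cases δ with ⟨hδ, _⟩ | ⟨hδ, _⟩ <;> linarith

theorem abs_mul_le_of_mem_Ioo {a l u x ε : ℝ} (ha : a ∈ Ioo l u) (hx : |x| < ε) :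
    |a * x| ≤ ε * max |l| |u| := by
  rw [abs_mul, mul_comm ε]
  exact mul_le_mul (abs_le_max_abs_abs ha.1.le ha.2.le) hx.le (abs_nonneg x)
    ((abs_nonneg _).trans (le_max_left _ _))

theorem volume_inter_Ioo_le_restrict_preimage_add {t r b₁ b₂ : ℝ} (ht : |t| ≤ r) (E : Set ℝ) :
    volume (E ∩ Ioo (b₁ + r) (b₂ - r)) ≤ volume.restrict (Ioo b₁ b₂) ((t + ·) ⁻¹' E) := by
  rw [Measure.restrict_apply' measurableSet_Ioo, ← measure_preimage_add volume t]
  obtain ⟨ht₁, ht₂⟩ := abs_le.1 ht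
  exact measure_mono fun y ⟨hyE, hy₁, hy₂⟩ =>
    ⟨hyE, by simp only at hy₁ hy₂; constructor <;> linarith⟩

theorem mul_volume_le_prod_preimage_affine (ν : Measure ℝ) {D E : Set ℝ} (hD : MeasurableSet D)
    (hE : MeasurableSet E) {x r b₁ b₂ : ℝ} (hDx : ∀ a ∈ D, |a * x| ≤ r) :
    ν D * volume (E ∩ Ioo (b₁ + r) (b₂ - r)) ≤
      (ν.restrict D).prod (volume.restrict (Ioo b₁ b₂)) {p | p.1 * x + p.2 ∈ E} := by
  have hS : MeasurableSet {p : ℝ × ℝ | p.1 * x + p.2 ∈ E} :=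
    ((measurable_fst.mul_const x).add measurable_snd) hE
  rw [Measure.prod_apply hS]
  calc ν D * volume (E ∩ Ioo (b₁ + r) (b₂ - r))
      = ∫⁻ _ in D, volume (E ∩ Ioo (b₁ + r) (b₂ - r)) ∂ν := by
        rw [setLIntegral_const, mul_comm]
    _ ≤ _ := setLIntegral_mono' hD fun a ha =>
        volume_inter_Ioo_le_restrict_preimage_add (hDx a ha) E

/-- **Proposition 2.1, part 2 for `x₀ = 0` (`prop: conditions for minorization`)**: if
`P((A₁,B₁) ∈ D₁ × D₂) ≥ c₀ ν₀(D₁ ∩ I₁) |D₂ ∩ I₂|` with `I₁ = (a₀−δ, a₀+δ)`,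
`I₂ = (b₁, b₂)`, `ν₀` σ-finite with `a₀` in its support, then there exist `ε > 0`
(with `ε < (b₂−b₁)/(2(|a₀−δ| ∨ |a₀+δ|))`) and `θ > 0` (one may take `θ = c₀ ν₀(I₁)`) such
that the kernel `P(x,E) = P(A₁ x + B₁ ∈ E)` satisfies `P(x,E) ≥ θ |E ∩ E₀|` for all
`x ∈ B_ε(0)` and Borel `E`, with `E₀ = (b₁ + ε(|a₀−δ| ∨ |a₀+δ|), b₂ − ε(|a₀−δ| ∨ |a₀+δ|))`. -/
theorem minorization_near_zero
    {Ω : Type*} [MeasurableSpace Ω] (μ : Measure Ω) [IsProbabilityMeasure μ]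
    (A B : Ω → ℝ) (hmA : Measurable A) (hmB : Measurable B)
    (a₀ δ b₁ b₂ c₀ : ℝ) (hδ : 0 < δ) (hb : b₁ < b₂) (hc₀ : 0 < c₀)
    (ν₀ : Measure ℝ) [SigmaFinite ν₀]
    (hsupp : ∀ U : Set ℝ, IsOpen U → a₀ ∈ U → 0 < ν₀ U)
    (hminor : ∀ D₁ D₂ : Set ℝ, MeasurableSet D₁ → MeasurableSet D₂ →
      c₀ * (ν₀ (D₁ ∩ Ioo (a₀ - δ) (a₀ + δ))).toReal * (volume (D₂ ∩ Ioo b₁ b₂)).toReal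
        ≤ (μ {ω | (A ω, B ω) ∈ D₁ ×ˢ D₂}).toReal) :
    ∃ ε > (0:ℝ), ε < (b₂ - b₁) / (2 * max |a₀ - δ| |a₀ + δ|) ∧ ∃ θ > (0:ℝ),
      ∀ x ∈ Metric.ball (0:ℝ) ε, ∀ E : Set ℝ, MeasurableSet E →
        θ * (volume (E ∩ Ioo (b₁ + ε * max |a₀ - δ| |a₀ + δ|)
            (b₂ - ε * max |a₀ - δ| |a₀ + δ|))).toReal
          ≤ (μ {ω | A ω * x + B ω ∈ E}).toReal := by
  set M := max |a₀ - δ| |a₀ + δ|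
  have hM : 0 < M := hδ.trans_le ((le_abs_self δ).trans (abs_le_max_abs_sub_abs_add a₀ δ))
  obtain ⟨ε, hε, hεM⟩ := exists_between (div_pos (sub_pos.2 hb) (by positivity : 0 < 2 * M))
  -- `ν₀ I₁` may be infinite, so `θ` is built from a subset of finite positive measure.
  obtain ⟨D, hD, hDI, hD₀, hD_fin⟩ :=
    Measure.exists_subset_measure_lt_top measurableSet_Ioo
      (hsupp _ isOpen_Ioo ⟨by linarith, by linarith⟩ : 0 < ν₀ (Ioo (a₀ - δ) (a₀ + δ)))
  have hAB : Measurable fun ω => (A ω, B ω) := hmA.prodMk hmB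
  have hdom : ENNReal.ofReal c₀ • (ν₀.restrict D).prod (volume.restrict (Ioo b₁ b₂))
      ≤ μ.map fun ω => (A ω, B ω) :=
    Measure.smul_prod_restrict_le hc₀.le hD hDI hD_fin.ne measure_Ioo_lt_top.ne
      fun s t hs ht => by rw [Measure.map_apply hAB (hs.prod ht)]; exact hminor s t hs ht
  refine ⟨ε, hε, hεM, c₀ * (ν₀ D).toReal, mul_pos hc₀ (ENNReal.toReal_pos hD₀.ne' hD_fin.ne),
    fun x hx E hE => ?_⟩
  have hDx : ∀ a ∈ D, |a * x| ≤ ε * M := fun a ha =>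
    abs_mul_le_of_mem_Ioo (hDI ha) (mem_ball_zero_iff.1 hx)
  have hS : MeasurableSet {p : ℝ × ℝ | p.1 * x + p.2 ∈ E} :=
    ((measurable_fst.mul_const x).add measurable_snd) hE
  have key : ENNReal.ofReal c₀ * (ν₀ D * volume (E ∩ Ioo (b₁ + ε * M) (b₂ - ε * M)))
      ≤ μ {ω | A ω * x + B ω ∈ E} :=
    calc _ ≤ (ENNReal.ofReal c₀ • (ν₀.restrict D).prod (volume.restrict (Ioo b₁ b₂)))
          {p | p.1 * x + p.2 ∈ E} :=
          mul_le_mul_right (mul_volume_le_prod_preimage_affine ν₀ hD hE hDx) _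
      _ ≤ _ := Measure.le_iff'.1 hdom _
      _ = _ := Measure.map_apply hAB hS
  have := ENNReal.toReal_mono (measure_ne_top μ _) key
  rwa [ENNReal.toReal_mul, ENNReal.toReal_mul, ENNReal.toReal_ofReal hc₀.le, ← mul_assoc] at this
end

section
/- Let {Δ_i}_{i≥1} be i.i.d. positive integer-valued random variables with finite mean E[Δ] and finite exponential moment E[t^{Δ}] < ∞ for some t > 1, let r_k = Δ_1 + ⋯ + Δ_k, and N(s) = sup{j ≥ 0 : r_j − 1 ≤ s}. Then for every δ > 0, P(sup_{t∈[0,1]} |N(nt)/n − t/E[Δ]| > δ) → 0 as n → ∞, and moreover the convergence is exponentially fast: there exist c > 0 and n_0 such that the probability is at most e^{-cn} for n ≥ n_0. -/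
/-!
Write `m = E[Δ]`. If `|r_k - k m| ≤ δ n / 2` for every `k ≤ K = ⌈(1/m + δ) n⌉`, the bracket
`r_{N(s)} ≤ s + 1 < r_{N(s)+1}` forces `|N(n u)/n - u/m| ≤ δ` for all `u ∈ [0, 1]` once
`δ n > 2`. The exponential moment puts `0` inside the domain of the cumulant generating
function of `Δ`, which is therefore differentiable at `0` with derivative `m`; hence
`cgf(±l) ≤ ±l m + η l` for small `l > 0`, the Chernoff bound makes each of the `O(n)`
deviation events exponentially unlikely, and the union bound costs only a polynomial factor.
-/

open MeasureTheory ProbabilityTheory Filter Set Real Topology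

/-- The paper's `N(s) = sup {j : r_j - 1 ≤ s}` along a single path `r`. -/
noncomputable def renewalCount (r : ℕ → ℕ) (s : ℝ) : ℕ := sSup {j : ℕ | (r j : ℝ) - 1 ≤ s}

namespace renewalCount

variable {r : ℕ → ℕ} {s : ℝ}

lemma bddAbove_setOf (hr : StrictMono r) : BddAbove {j : ℕ | (r j : ℝ) - 1 ≤ s} := by
  refine ⟨⌈s + 1⌉₊, fun j (hj : (r j : ℝ) - 1 ≤ s) ↦ Nat.cast_le.mp (le_trans ?_ (Nat.le_ceil _))⟩
  have : (j : ℝ) ≤ r j := by exact_mod_cast hr.id_le j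
  linarith

lemma apply_le (hr : StrictMono r) (hs : (r 0 : ℝ) - 1 ≤ s) :
    (r (renewalCount r s) : ℝ) ≤ s + 1 := by
  have : (r (renewalCount r s) : ℝ) - 1 ≤ s := Nat.sSup_mem ⟨0, hs⟩ (bddAbove_setOf hr)
  linarith

lemma lt_apply_succ (hr : StrictMono r) : s + 1 < r (renewalCount r s + 1) := by
  by_contra! h
  have : renewalCount r s + 1 ≤ renewalCount r s :=
    le_csSup (bddAbove_setOf hr) (show (r (renewalCount r s + 1) : ℝ) - 1 ≤ s by linarith)
  omega

lemma abs_mul_sub_le (hr : StrictMono r) (hs : (r 0 : ℝ) - 1 ≤ s) {m ε : ℝ} {K : ℕ}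
    (hm : 1 ≤ m) (hdev : ∀ k ≤ K, |(r k : ℝ) - k * m| ≤ ε) (hK : s + 1 + ε < K * m) :
    |renewalCount r s * m - s| ≤ ε + m := by
  set ν := renewalCount r s
  have hνK : ν < K := by
    by_contra! h
    have := (abs_le.mp (hdev K le_rfl)).1
    have : (r K : ℝ) ≤ r ν := by exact_mod_cast hr.monotone h
    linarith [apply_le hr hs]
  have hν := abs_le.mp (hdev ν hνK.le)
  have hν₁ := abs_le.mp (hdev (ν + 1) hνK)
  push_cast at hν₁
  rw [abs_le]
  constructor <;> nlinarith [apply_le hr hs, lt_apply_succ hr (s := s)]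

lemma abs_div_sub_div_le (hr : StrictMono r) (h0 : r 0 = 0) {m δ n u : ℝ} {K : ℕ} (hm : 1 ≤ m)
    (hn : 0 < n) (hδn : 2 < δ * n) (hK : (1 / m + δ) * n ≤ K)
    (hdev : ∀ k ≤ K, |(r k : ℝ) - k * m| ≤ δ * n / 2) (hu : u ∈ Icc (0 : ℝ) 1) :
    |(renewalCount r (n * u) : ℝ) / n - u / m| ≤ δ := by
  have hm0 : 0 < m := by linarith
  have hs : (r 0 : ℝ) - 1 ≤ n * u := by
    rw [h0, Nat.cast_zero]; nlinarith [mul_nonneg hn.le hu.1]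
  have hKm : n * u + 1 + δ * n / 2 < K * m := by
    have h₁ : (1 / m + δ) * n * m ≤ K * m := mul_le_mul_of_nonneg_right hK hm0.le
    have h₂ : (1 / m + δ) * n * m = n + δ * n * m := by field_simp
    nlinarith [mul_le_mul_of_nonneg_left hu.2 hn.le]
  rw [div_sub_div _ _ hn.ne' hm0.ne', abs_div, abs_of_pos (mul_pos hn hm0),
    div_le_iff₀ (mul_pos hn hm0)]
  calc |(renewalCount r (n * u) : ℝ) * m - n * u| ≤ δ * n / 2 + m :=
        abs_mul_sub_le hr hs hm hdev hKm
    _ ≤ δ * (n * m) := by nlinarith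

end renewalCount

section Chernoff

variable {Ω : Type*} [MeasurableSpace Ω] {μ : Measure Ω} {X : Ω → ℝ}

lemma zero_mem_interior_integrableExpSet_of_nonneg (hX : ∀ᵐ ω ∂μ, 0 ≤ X ω) {s : ℝ} (hs : 0 < s)
    (hint : Integrable (fun ω ↦ exp (s * X ω)) μ) : 0 ∈ interior (integrableExpSet X μ) := by
  have hXm : AEMeasurable X μ := aemeasurable_of_aemeasurable_exp_mul hs.ne' hint.1.aemeasurable
  refine mem_interior_iff_mem_nhds.mpr (mem_of_superset (Iio_mem_nhds hs) fun l hl ↦ ?_)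
  refine hint.mono' (hXm.const_mul l).exp.aestronglyMeasurable ?_
  filter_upwards [hX] with ω hω
  rw [norm_of_nonneg (exp_pos _).le]
  exact exp_le_exp.mpr (mul_le_mul_of_nonneg_right (le_of_lt hl) hω)

lemma zero_mem_interior_integrableExpSet_natCast {Y : Ω → ℕ} {t : ℝ} (ht : 1 < t)
    (hint : Integrable (fun ω ↦ t ^ Y ω) μ) :
    0 ∈ interior (integrableExpSet (fun ω ↦ (Y ω : ℝ)) μ) :=
  zero_mem_interior_integrableExpSet_of_nonneg (ae_of_all _ fun ω ↦ Nat.cast_nonneg _)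
    (log_pos ht) (hint.congr (ae_of_all _ fun ω ↦ by
      simp [← rpow_natCast, rpow_def_of_pos (zero_lt_one.trans ht), mul_comm]))

lemma eventually_cgf_le [IsProbabilityMeasure μ] (h : 0 ∈ interior (integrableExpSet X μ))
    {η : ℝ} (hη : 0 < η) : ∀ᶠ l in 𝓝 0, cgf X μ l ≤ l * μ[X] + η * |l| := by
  have hd : HasDerivAt (cgf X μ) μ[X] 0 := by
    simpa [deriv_cgf_zero h] using (analyticAt_cgf h).differentiableAt.hasDerivAt
  filter_upwards [hd.isLittleO.def hη] with l hl
  simp only [cgf_zero, sub_zero, smul_eq_mul, norm_eq_abs] at hl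
  linarith [(abs_le.mp hl).2]

lemma measureReal_lt_abs_sub_le_exp_cgf [IsFiniteMeasure μ] (c a : ℝ) {l : ℝ} (hl : 0 ≤ l)
    (hpos : Integrable (fun ω ↦ exp (l * X ω)) μ) (hneg : Integrable (fun ω ↦ exp (-l * X ω)) μ) :
    μ.real {ω | a < |X ω - c|} ≤
      exp (-l * (c + a) + cgf X μ l) + exp (l * (c - a) + cgf X μ (-l)) := by
  have hsub : {ω | a < |X ω - c|} ⊆ {ω | c + a ≤ X ω} ∪ {ω | X ω ≤ c - a} := by
    intro ω (hω : a < |X ω - c|)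
    rcases lt_abs.mp hω with h | h
    · exact Or.inl (show c + a ≤ X ω by linarith)
    · exact Or.inr (show X ω ≤ c - a by linarith)
  calc μ.real {ω | a < |X ω - c|} ≤ μ.real {ω | c + a ≤ X ω} + μ.real {ω | X ω ≤ c - a} :=
        (measureReal_mono hsub).trans (measureReal_union_le _ _)
    _ ≤ _ := by
        gcongr
        · exact measure_ge_le_exp_cgf _ hl hpos
        · simpa using measure_le_le_exp_cgf (c - a) (neg_nonpos.mpr hl) hneg

lemma exists_measureReal_lt_abs_sum_sub_le [IsProbabilityMeasure μ] {X : ℕ → Ω → ℝ}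
    (hmeas : ∀ i, Measurable (X i)) (hindep : iIndepFun X μ)
    (hident : ∀ i, IdentDistrib (X i) (X 0) μ μ) (h0 : 0 ∈ interior (integrableExpSet (X 0) μ))
    {η : ℝ} (hη : 0 < η) :
    ∃ l > 0, ∀ (k : ℕ) (a : ℝ),
      μ.real {ω | a < |∑ i ∈ Finset.range k, X i ω - k * μ[X 0]|} ≤
        2 * exp (-l * a + η * l * k) := by
  have hgood : ∀ᶠ l in 𝓝 0,
      l ∈ integrableExpSet (X 0) μ ∧ cgf (X 0) μ l ≤ l * μ[X 0] + η * |l| :=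
    Eventually.and (mem_interior_iff_mem_nhds.mp h0) (eventually_cgf_le h0 hη)
  have hgood_neg := (continuous_neg.tendsto' (0 : ℝ) 0 neg_zero).eventually hgood
  obtain ⟨l, ⟨⟨hint_pos, hcgf_pos⟩, hint_neg, hcgf_neg⟩, hl⟩ :=
    (((hgood.and hgood_neg).filter_mono nhdsWithin_le_nhds).and
      (self_mem_nhdsWithin : ∀ᶠ l in 𝓝[>] (0 : ℝ), 0 < l)).exists
  rw [abs_of_pos hl] at hcgf_pos
  rw [abs_neg, abs_of_pos hl] at hcgf_neg
  refine ⟨l, hl, fun k a ↦ ?_⟩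
  have hint : ∀ t ∈ integrableExpSet (X 0) μ, ∀ i, Integrable (fun ω ↦ exp (t * X i ω)) μ :=
    fun t ht i ↦ ((hident i).comp (measurable_const_mul t).exp).integrable_iff.mpr ht
  have hcgf : ∀ t ∈ integrableExpSet (X 0) μ,
      cgf (∑ i ∈ Finset.range k, X i) μ t = k * cgf (X 0) μ t := by
    intro t ht
    rw [hindep.cgf_sum hmeas fun i _ ↦ hint t ht i]
    simp [cgf, mgf_congr_identDistrib (hident _)]
  have := measureReal_lt_abs_sub_le_exp_cgf (X := ∑ i ∈ Finset.range k, X i) (k * μ[X 0]) a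
    hl.le (hindep.integrable_exp_mul_sum hmeas fun i _ ↦ hint l hint_pos i)
    (hindep.integrable_exp_mul_sum hmeas fun i _ ↦ hint (-l) hint_neg i)
  simp only [Finset.sum_apply] at this
  refine this.trans ?_
  rw [hcgf l hint_pos, hcgf (-l) hint_neg, two_mul]
  have hk : (0 : ℝ) ≤ k := Nat.cast_nonneg k
  refine add_le_add (exp_le_exp.mpr ?_) (exp_le_exp.mpr ?_)
  · nlinarith [mul_le_mul_of_nonneg_left hcgf_pos hk]
  · nlinarith [mul_le_mul_of_nonneg_left hcgf_neg hk]

end Chernoff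

lemma eventually_mul_mul_exp_neg_two_mul_le (A : ℝ) {c : ℝ} (hc : 0 < c) :
    ∀ᶠ n : ℕ in atTop, A * n * exp (-(2 * c) * n) ≤ exp (-c * n) := by
  have h : Tendsto (fun n : ℕ ↦ A * ((c * n) ^ 1 * exp (-(c * n)))) atTop (𝓝 (A * 0)) :=
    ((tendsto_pow_mul_exp_neg_atTop_nhds_zero 1).comp
      (tendsto_natCast_atTop_atTop.const_mul_atTop hc)).const_mul A
  filter_upwards [h.eventually (gt_mem_nhds (by simpa using hc))] with n hn
  have hsplit : exp (-(2 * c) * n) = exp (-(c * n)) * exp (-c * n) := by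
    rw [← exp_add]; ring_nf
  rw [hsplit, ← mul_assoc]
  refine mul_le_of_le_one_left (exp_pos _).le ?_
  rw [pow_one] at hn
  nlinarith

lemma tendsto_zero_and_exists_le_exp_of_eventually {f : ℕ → ℝ} (hf : ∀ n, 0 ≤ f n) {c : ℝ}
    (hc : 0 < c) (h : ∀ᶠ n in atTop, f n ≤ exp (-c * n)) :
    Tendsto f atTop (𝓝 0) ∧ ∃ c > (0 : ℝ), ∃ n₀ : ℕ, ∀ n, n₀ ≤ n → f n ≤ exp (-c * n) := by
  refine ⟨tendsto_of_tendsto_of_tendsto_of_le_of_le' tendsto_const_nhds ?_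
    (Eventually.of_forall hf) h, c, hc, eventually_atTop.mp h⟩
  exact (tendsto_exp_neg_atTop_nhds_zero.comp
    (tendsto_natCast_atTop_atTop.const_mul_atTop hc)).congr fun n ↦ by simp [neg_mul]

section RenewalProcess

variable {Ω : Type*} [MeasurableSpace Ω] (μ : Measure Ω) [IsFiniteMeasure μ]
  {r : ℕ → Ω → ℕ}

lemma measureReal_renewalCount_deviation_le_sum (hr : ∀ ω, StrictMono (r · ω))
    (h0 : ∀ ω, r 0 ω = 0) {m δ n : ℝ} {K : ℕ} (hm : 1 ≤ m) (hn : 0 < n) (hδn : 2 < δ * n)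
    (hK : (1 / m + δ) * n ≤ K) :
    μ.real {ω | ∃ u ∈ Icc (0 : ℝ) 1, δ < |(renewalCount (r · ω) (n * u) : ℝ) / n - u / m|} ≤
      ∑ k ∈ Finset.range (K + 1), μ.real {ω | δ * n / 2 < |(r k ω : ℝ) - k * m|} := by
  refine (measureReal_mono ?_ (measure_ne_top μ _)).trans (measureReal_biUnion_finset_le _ _)
  rintro ω ⟨u, hu, hlt⟩
  by_contra hω
  simp only [mem_iUnion, Finset.mem_range, mem_ofPred_eq, not_exists, not_lt] at hω
  exact hlt.not_ge (renewalCount.abs_div_sub_div_le (hr ω) (h0 ω) hm hn hδn hK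
    (fun k hk ↦ hω k (Nat.lt_succ_of_le hk)) hu)

lemma measureReal_renewalCount_deviation_le (hr : ∀ ω, StrictMono (r · ω))
    (h0 : ∀ ω, r 0 ω = 0) {m δ l : ℝ} (hm : 1 ≤ m) (hδ : 0 < δ) (hl : 0 < l)
    (hdev : ∀ (k : ℕ) (a : ℝ), μ.real {ω | a < |(r k ω : ℝ) - k * m|} ≤
      2 * exp (-l * a + δ / (4 * (2 + δ)) * l * k))
    {n : ℝ} (hn : 1 ≤ n) (hδn : 2 < δ * n) :
    μ.real {ω | ∃ u ∈ Icc (0 : ℝ) 1, δ < |(renewalCount (r · ω) (n * u) : ℝ) / n - u / m|} ≤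
      2 * (3 + δ) * n * exp (-(l * δ / 4) * n) := by
  set K := ⌈(1 / m + δ) * n⌉₊
  have hK : (K : ℝ) + 1 ≤ (1 + δ) * n + 2 := by
    have : 1 / m ≤ 1 := (div_le_one (by linarith)).mpr hm
    nlinarith [Nat.ceil_lt_add_one (show 0 ≤ (1 / m + δ) * n by positivity)]
  calc _ ≤ ∑ k ∈ Finset.range (K + 1), μ.real {ω | δ * n / 2 < |(r k ω : ℝ) - k * m|} :=
        measureReal_renewalCount_deviation_le_sum μ hr h0 hm (by linarith) hδn (Nat.le_ceil _)
    _ ≤ ∑ k ∈ Finset.range (K + 1), 2 * exp (-(l * δ / 4) * n) := by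
        refine Finset.sum_le_sum fun k hk ↦ (hdev k _).trans ?_
        have hk : (k : ℝ) + 1 ≤ K + 1 := by exact_mod_cast Finset.mem_range.mp hk
        have hkn : (k : ℝ) ≤ (2 + δ) * n := by nlinarith
        have hηk : δ / (4 * (2 + δ)) * k ≤ δ * n / 4 :=
          calc δ / (4 * (2 + δ)) * k ≤ δ / (4 * (2 + δ)) * ((2 + δ) * n) := by gcongr
            _ = δ * n / 4 := by field_simp
        gcongr
        nlinarith [mul_le_mul_of_nonneg_left hηk hl.le]
    _ ≤ 2 * (3 + δ) * n * exp (-(l * δ / 4) * n) := by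
        rw [Finset.sum_const, Finset.card_range, nsmul_eq_mul]
        push_cast
        nlinarith [exp_pos (-(l * δ / 4) * n)]

end RenewalProcess

theorem renewal_counting_fLLN_exponential_general
    {Ω : Type*} [MeasurableSpace Ω] (μ : Measure Ω) [IsProbabilityMeasure μ]
    (Δ : ℕ → Ω → ℕ) (hmeas : ∀ i, Measurable (Δ i)) (hpos : ∀ i ω, 1 ≤ Δ i ω)
    (hindep : iIndepFun Δ μ)
    (hident : ∀ i, 1 ≤ i → IdentDistrib (Δ i) (Δ 1) μ μ)
    (t : ℝ) (ht : 1 < t) (hexp : Integrable (fun ω => t ^ (Δ 1 ω)) μ)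
    (r : ℕ → Ω → ℕ) (hr : ∀ k ω, r k ω = ∑ i ∈ Finset.range k, Δ (i + 1) ω)
    (N : ℝ → Ω → ℕ) (hN : ∀ s ω, N s ω = sSup {j : ℕ | (r j ω : ℝ) - 1 ≤ s})
    (δ : ℝ) (hδ : 0 < δ) :
    Tendsto (fun n : ℕ =>
        (μ {ω | ∃ u ∈ Icc (0:ℝ) 1,
          δ < |(N (n * u) ω : ℝ) / n - u / ∫ ω', (Δ 1 ω' : ℝ) ∂μ|}).toReal)
      atTop (nhds 0) ∧
    ∃ c > (0:ℝ), ∃ n₀ : ℕ, ∀ n : ℕ, n₀ ≤ n →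
      (μ {ω | ∃ u ∈ Icc (0:ℝ) 1,
          δ < |(N (n * u) ω : ℝ) / n - u / ∫ ω', (Δ 1 ω' : ℝ) ∂μ|}).toReal
        ≤ Real.exp (-c * n) := by
  set X : ℕ → Ω → ℝ := fun i ω ↦ Δ (i + 1) ω
  have hX0 : 0 ∈ interior (integrableExpSet (X 0) μ) :=
    zero_mem_interior_integrableExpSet_natCast ht hexp
  have hm : 1 ≤ μ[X 0] := by
    simpa using integral_mono (integrable_const 1) (integrable_of_mem_interior_integrableExpSet hX0)
      fun ω ↦ (Nat.one_le_cast.mpr (hpos 1 ω) : (1 : ℝ) ≤ X 0 ω)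
  obtain ⟨l, hl, hdev⟩ := exists_measureReal_lt_abs_sum_sub_le (X := X)
    (fun i ↦ measurable_from_top.comp (hmeas (i + 1)))
    ((hindep.precomp (add_left_injective 1)).comp (fun _ ↦ ((↑) : ℕ → ℝ))
      fun _ ↦ measurable_from_top)
    (fun i ↦ (hident (i + 1) (Nat.le_add_left 1 i)).comp measurable_from_top) hX0
    (η := δ / (4 * (2 + δ))) (by positivity)
  have hrX : ∀ k ω, (r k ω : ℝ) = ∑ i ∈ Finset.range k, X i ω := by simp [hr, X]
  have hrmono : ∀ ω, StrictMono (r · ω) := fun ω ↦ strictMono_nat_of_lt_succ fun k ↦ by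
    rw [hr, hr, Finset.sum_range_succ]
    exact Nat.lt_add_of_pos_right (hpos _ ω)
  have hr0 : ∀ ω, r 0 ω = 0 := by simp [hr]
  obtain rfl : N = fun s ω ↦ renewalCount (r · ω) s := funext₂ hN
  refine tendsto_zero_and_exists_le_exp_of_eventually (fun _ ↦ measureReal_nonneg)
    (c := l * δ / 8) (by positivity) ?_
  filter_upwards [eventually_ge_atTop 1,
    (tendsto_natCast_atTop_atTop.const_mul_atTop hδ).eventually_gt_atTop 2,
    eventually_mul_mul_exp_neg_two_mul_le (2 * (3 + δ)) (c := l * δ / 8) (by positivity)]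
    with n hn hδn hA
  refine (measureReal_renewalCount_deviation_le μ hrmono hr0 hm hδ hl
    (fun k a ↦ by simpa only [hrX] using hdev k a) (by exact_mod_cast hn) hδn).trans ?_
  rwa [show 2 * (l * δ / 8) = l * δ / 4 by ring] at hA

/-- **Functional LLN with exponential rate for the renewal counting process** (used in the
proof of Lemma 5.1): for i.i.d. positive integer renewals `Δᵢ` with finite mean and a finite
exponential moment, with `r_k = Δ₁ + ⋯ + Δ_k` and `N(s) = sup{j : r_j − 1 ≤ s}`, for every
`δ > 0` the probability `P(sup_{t ∈ [0,1]} |N(nt)/n − t/EΔ| > δ)` tends to `0`, and in fact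
is eventually bounded by `e^{−cn}` for some `c > 0`. -/
theorem renewal_counting_fLLN_exponential
    {Ω : Type*} [MeasurableSpace Ω] (μ : Measure Ω) [IsProbabilityMeasure μ]
    (Δ : ℕ → Ω → ℕ) (hmeas : ∀ i, Measurable (Δ i)) (hpos : ∀ i ω, 1 ≤ Δ i ω)
    (hindep : iIndepFun Δ μ)
    (hident : ∀ i, 1 ≤ i → IdentDistrib (Δ i) (Δ 1) μ μ)
    (hmean : Integrable (fun ω => (Δ 1 ω : ℝ)) μ)
    (t : ℝ) (ht : 1 < t) (hexp : Integrable (fun ω => t ^ (Δ 1 ω)) μ)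
    (r : ℕ → Ω → ℕ) (hr : ∀ k ω, r k ω = ∑ i ∈ Finset.range k, Δ (i + 1) ω)
    (N : ℝ → Ω → ℕ) (hN : ∀ s ω, N s ω = sSup {j : ℕ | (r j ω : ℝ) - 1 ≤ s})
    (δ : ℝ) (hδ : 0 < δ) :
    Tendsto (fun n : ℕ =>
        (μ {ω | ∃ u ∈ Icc (0:ℝ) 1,
          δ < |(N (n * u) ω : ℝ) / n - u / ∫ ω', (Δ 1 ω' : ℝ) ∂μ|}).toReal)
      atTop (nhds 0) ∧
    ∃ c > (0:ℝ), ∃ n₀ : ℕ, ∀ n : ℕ, n₀ ≤ n →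
      (μ {ω | ∃ u ∈ Icc (0:ℝ) 1,
          δ < |(N (n * u) ω : ℝ) / n - u / ∫ ω', (Δ 1 ω' : ℝ) ∂μ|}).toReal
        ≤ Real.exp (-c * n) :=
  renewal_counting_fLLN_exponential_general μ Δ hmeas hpos hindep hident t ht hexp r hr N hN δ hδ
end

section
/- Define m, π_1 : D[0,1] → ℝ by m(ξ) = inf_{t∈[0,1]} ξ(t) and π_1(ξ) = ξ(1). For real numbers a_+ > max{μ, 0} and a_- > max{−μ, 0}, the set E = {ξ ∈ D[0,1] : ξ(1) ≥ a_+, inf_{t∈[0,1]} ξ(t) ≤ −a_-} = m^{-1}(−∞, −a_-] ∩ π_1^{-1}[a_+, ∞) is closed in D[0,1] equipped with the M_1' topology, and E is bounded away (in the d_{M_1'} metric) from the set D̲^μ_{≪2} of functions of the form μt + x·1_{[y,1]}(t) with x ∈ ℝ and y ∈ [0,1], together with the function μt; i.e., there exists r > 0 such that d_{M_1'}(ξ₁, ξ₂) ≥ r for all ξ₁ ∈ E and ξ₂ ∈ D̲^μ_{≪2}. -/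
open Set Filter Topology

noncomputable section

/-- `ξ(t⁻)` with the convention `ξ(0⁻) = 0`. -/
def leftVal (ξ : ℝ → ℝ) (t : ℝ) : ℝ := if t = 0 then 0 else Function.leftLim ξ t

/-- A càdlàg function on `[0,1]`: right-continuous on `[0,1)` with left limits on `(0,1]`. -/
def IsCadlag (ξ : ℝ → ℝ) : Prop :=
  (∀ t ∈ Ico (0:ℝ) 1, Tendsto ξ (nhdsWithin t (Ioi t)) (nhds (ξ t))) ∧
  (∀ t ∈ Ioc (0:ℝ) 1, ∃ l : ℝ, Tendsto ξ (nhdsWithin t (Iio t)) (nhds l))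

/-- The extended completed graph `Γ'_ξ` of `ξ` (with `ξ(0⁻) = 0`). -/
def extGraph (ξ : ℝ → ℝ) : Set (ℝ × ℝ) :=
  {p | p.2 ∈ Icc (0:ℝ) 1 ∧
    p.1 ∈ Icc (min (leftVal ξ p.2) (ξ p.2)) (max (leftVal ξ p.2) (ξ p.2))}

/-- `(u, v)` is a parametric representation of `ξ`: a continuous map of `[0,1]` onto `Γ'_ξ`
which is nondecreasing for the order on the graph. -/
def ParamRep (ξ u v : ℝ → ℝ) : Prop :=
  ContinuousOn u (Icc 0 1) ∧ ContinuousOn v (Icc 0 1) ∧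
  (fun s => (u s, v s)) '' Icc (0:ℝ) 1 = extGraph ξ ∧
  ∀ s₁ ∈ Icc (0:ℝ) 1, ∀ s₂ ∈ Icc (0:ℝ) 1, s₁ ≤ s₂ →
    v s₁ < v s₂ ∨ (v s₁ = v s₂ ∧ |leftVal ξ (v s₁) - u s₁| ≤ |leftVal ξ (v s₂) - u s₂|)

/-- The `M₁'` metric on `D[0,1]`. -/
def dM1 (ξ ζ : ℝ → ℝ) : ℝ :=
  sInf { r | ∃ u₁ v₁ u₂ v₂ : ℝ → ℝ, ParamRep ξ u₁ v₁ ∧ ParamRep ζ u₂ v₂ ∧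
    r = max (⨆ s : Icc (0:ℝ) 1, |u₁ s - u₂ s|) (⨆ s : Icc (0:ℝ) 1, |v₁ s - v₂ s|) }

/-- The Skorokhod `J₁` metric on `D[0,1]`. -/
def dJ1 (ξ ζ : ℝ → ℝ) : ℝ :=
  sInf { r | ∃ lam : ℝ → ℝ, ContinuousOn lam (Icc 0 1) ∧ StrictMonoOn lam (Icc 0 1) ∧
    lam '' Icc (0:ℝ) 1 = Icc (0:ℝ) 1 ∧
    r = max (⨆ s : Icc (0:ℝ) 1, |lam s - (s:ℝ)|) (⨆ s : Icc (0:ℝ) 1, |ξ (lam s) - ζ s|) }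

/-- The set of discontinuities of `ξ` in `[0,1]` (with `ξ(0⁻) = 0`). -/
def Disc (ξ : ℝ → ℝ) : Set ℝ := {t ∈ Icc (0:ℝ) 1 | ξ t ≠ leftVal ξ t}

end

noncomputable section

open Set

/-- `ξ` is piecewise constant on `[0,1]`: there are `0 = t₀ < t₁ < ⋯ < t_m = 1` with `ξ`
constant on each `[t_{i-1}, t_i)`. -/
def PiecewiseConstant (ξ : ℝ → ℝ) : Prop :=
  ∃ (m : ℕ) (t : ℕ → ℝ), 0 < m ∧ t 0 = 0 ∧ t m = 1 ∧ (∀ i < m, t i < t (i + 1)) ∧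
    ∀ i < m, ∀ s₁ ∈ Ico (t i) (t (i + 1)), ∀ s₂ ∈ Ico (t i) (t (i + 1)), ξ s₁ = ξ s₂

/-- `D̲_{≤ j}`: nondecreasing piecewise constant functions with at most `j` discontinuities
(a nonzero value at `0` counts as a jump, via the convention `ξ(0⁻) = 0`). -/
def Dle (j : ℕ) : Set (ℝ → ℝ) :=
  {ξ | PiecewiseConstant ξ ∧ MonotoneOn ξ (Icc 0 1) ∧ 0 ≤ ξ 0 ∧
    (Disc ξ).Finite ∧ (Disc ξ).ncard ≤ j}

/-- `D̲^z_{≤ j} = {z·id + ξ' : ξ' ∈ D̲_{≤ j}}`. -/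
def DleZ (z : ℝ) (j : ℕ) : Set (ℝ → ℝ) :=
  {ξ | ∃ ξ' ∈ Dle j, ξ = fun t => z * t + ξ' t}

/-- `D̲_{≪ j}`: piecewise constant functions with strictly fewer than `j` discontinuities. -/
def Dll (j : ℕ) : Set (ℝ → ℝ) :=
  {ξ | PiecewiseConstant ξ ∧ (Disc ξ).Finite ∧ (Disc ξ).ncard < j}

/-- `D̲^z_{≪ j} = {z·id + ξ' : ξ' ∈ D̲_{≪ j}}`. -/
def DllZ (z : ℝ) (j : ℕ) : Set (ℝ → ℝ) :=
  {ξ | ∃ ξ' ∈ Dll j, ξ = fun t => z * t + ξ' t}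

end

/-!
Both `π₁` and `ξ ↦ min (m ξ) 0` are `1`-Lipschitz for `d_{M₁'}`: every parametric representation
ends at `(ξ 1, 1)`, and the infimum of the extended completed graph, which contains `ξ(0⁻) = 0`,
is `min (m ξ) 0`. Closedness of `E` follows. If `ξ₂ = μ t + x 1_{[y,1]}(t)` is at distance
`d < a₊ - μ` from some `ξ₁ ∈ E`, the endpoints force `x > 0`, so `m ξ₂ ≥ min μ 0`, while
`min (m ξ₂) 0 ≤ -a₋ + d`; hence `d ≥ min (a₊ - μ) (a₋ + min μ 0)`.

Since `d_{M₁'}` is an infimum, this needs a parametric representation of every càdlàg function.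
Its jump times are countable; enumerating them as `f n`, the time change
`t ↦ t + ∑_{f n ≤ t} 2⁻ⁿ` opens a gap of length `2⁻ⁿ` at the `n`-th jump, across which the jump
segment is traversed linearly.
-/

noncomputable section

variable {ξ ζ u v : ℝ → ℝ}

lemma leftVal_zero (ξ : ℝ → ℝ) : leftVal ξ 0 = 0 := if_pos rfl

lemma leftVal_of_ne_zero (ξ : ℝ → ℝ) {t : ℝ} (ht : t ≠ 0) : leftVal ξ t = Function.leftLim ξ t :=
  if_neg ht

lemma leftVal_eventuallyEq_leftLim {l : Filter ℝ} (hl : ∀ᶠ t in l, 0 < t) :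
    leftVal ξ =ᶠ[l] Function.leftLim ξ :=
  hl.mono fun _ ht => leftVal_of_ne_zero ξ ht.ne'

lemma tendsto_of_mem_uIcc {α : Type*} {l : Filter α} {a b c : α → ℝ} {x : ℝ}
    (ha : Tendsto a l (𝓝 x)) (hb : Tendsto b l (𝓝 x)) (hc : ∀ᶠ y in l, c y ∈ uIcc (a y) (b y)) :
    Tendsto c l (𝓝 x) := by
  refine tendsto_of_tendsto_of_tendsto_of_le_of_le' ?_ ?_ (hc.mono fun _ h => h.1)
    (hc.mono fun _ h => h.2)
  · simpa using ha.min hb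
  · simpa using ha.max hb

lemma tendsto_leftLim_nhdsWithin_of_tendsto {f : ℝ → ℝ} {s : Set ℝ} (hs : IsOpen s) {a l : ℝ}
    (hf : Tendsto f (𝓝[s] a) (𝓝 l))
    (hex : ∀ᶠ y in 𝓝[s] a, ∃ l', Tendsto f (𝓝[<] y) (𝓝 l')) :
    Tendsto (Function.leftLim f) (𝓝[s] a) (𝓝 l) := by
  refine (closed_nhds_basis l).tendsto_right_iff.2 fun C ⟨hC, hCc⟩ => ?_
  filter_upwards [self_mem_nhdsWithin, eventually_eventually_nhdsWithin.2 (hf hC), hex]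
    with y hy hyC ⟨l', hl'⟩
  rw [leftLim_eq_of_tendsto hl']
  rw [hs.nhdsWithin_eq hy] at hyC
  exact hCc.mem_of_tendsto hl' (hyC.filter_mono nhdsWithin_le_nhds)

namespace IsCadlag

lemma tendsto_nhdsGT (hξ : IsCadlag ξ) {t : ℝ} (ht : t ∈ Ico (0:ℝ) 1) :
    Tendsto ξ (𝓝[>] t) (𝓝 (ξ t)) :=
  hξ.1 t ht

lemma tendsto_nhdsLT (hξ : IsCadlag ξ) {t : ℝ} (ht : t ∈ Ioc (0:ℝ) 1) :
    Tendsto ξ (𝓝[<] t) (𝓝 (Function.leftLim ξ t)) :=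
  tendsto_leftLim_of_tendsto (hξ.2 t ht)

lemma tendsto_leftVal_nhdsGT (hξ : IsCadlag ξ) {t : ℝ} (ht : t ∈ Ico (0:ℝ) 1) :
    Tendsto (leftVal ξ) (𝓝[>] t) (𝓝 (ξ t)) := by
  have hpos : ∀ᶠ y in 𝓝[>] t, 0 < y := eventually_nhdsWithin_of_forall fun y hy => ht.1.trans_lt hy
  refine (tendsto_leftLim_nhdsWithin_of_tendsto isOpen_Ioi (hξ.tendsto_nhdsGT ht) ?_).congr'
    (leftVal_eventuallyEq_leftLim hpos).symm
  filter_upwards [hpos, Ioo_mem_nhdsGT ht.2] with y h0 h1 using hξ.2 y ⟨h0, h1.2.le⟩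

lemma tendsto_leftVal_nhdsLT (hξ : IsCadlag ξ) {t : ℝ} (ht : t ∈ Ioc (0:ℝ) 1) :
    Tendsto (leftVal ξ) (𝓝[<] t) (𝓝 (Function.leftLim ξ t)) := by
  have hpos : ∀ᶠ y in 𝓝[<] t, 0 < y := by
    filter_upwards [Ioo_mem_nhdsLT ht.1] with y hy using hy.1
  refine (tendsto_leftLim_nhdsWithin_of_tendsto isOpen_Iio (hξ.tendsto_nhdsLT ht) ?_).congr'
    (leftVal_eventuallyEq_leftLim hpos).symm
  filter_upwards [Ioo_mem_nhdsLT ht.1] with y hy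
  exact hξ.2 y ⟨hy.1, hy.2.le.trans ht.2⟩

lemma eventually_abs_sub_leftVal_lt (hξ : IsCadlag ξ) {ε : ℝ} (hε : 0 < ε) {x : ℝ}
    (hx : x ∈ Icc (0:ℝ) 1) :
    ∀ᶠ y in 𝓝[≠] x, y ∈ Icc (0:ℝ) 1 → |ξ y - leftVal ξ y| < ε := by
  have small {l : Filter ℝ} {c : ℝ} (h₁ : Tendsto ξ l (𝓝 c)) (h₂ : Tendsto (leftVal ξ) l (𝓝 c)) :
      ∀ᶠ y in l, y ∈ Icc (0:ℝ) 1 → |ξ y - leftVal ξ y| < ε := by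
    have := (h₁.sub h₂).abs
    rw [sub_self, abs_zero] at this
    exact (this.eventually (gt_mem_nhds hε)).mono fun _ h _ => h
  rw [← nhdsLT_sup_nhdsGT, eventually_sup]
  constructor
  · rcases hx.1.eq_or_lt with rfl | h0
    · exact eventually_nhdsWithin_of_forall fun y hy hy' => absurd hy'.1 (not_le.2 hy)
    · exact small (hξ.tendsto_nhdsLT ⟨h0, hx.2⟩) (hξ.tendsto_leftVal_nhdsLT ⟨h0, hx.2⟩)
  · rcases hx.2.eq_or_lt with rfl | h1
    · exact eventually_nhdsWithin_of_forall fun y hy hy' => absurd hy'.2 (not_le.2 hy)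
    · exact small (hξ.tendsto_nhdsGT ⟨hx.1, h1⟩) (hξ.tendsto_leftVal_nhdsGT ⟨hx.1, h1⟩)

lemma finite_setOf_le_abs_sub_leftVal (hξ : IsCadlag ξ) {ε : ℝ} (hε : 0 < ε) :
    {t ∈ Icc (0:ℝ) 1 | ε ≤ |ξ t - leftVal ξ t|}.Finite := by
  by_contra hinf
  obtain ⟨x, hx, hacc⟩ :=
    Set.Infinite.exists_accPt_of_subset_isCompact hinf isCompact_Icc fun _ h => h.1
  rw [accPt_iff_frequently_nhdsNE] at hacc
  obtain ⟨y, hy, hy'⟩ := (hacc.and_eventually (hξ.eventually_abs_sub_leftVal_lt hε hx)).exists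
  exact (hy' hy.1).not_ge hy.2

lemma countable_disc (hξ : IsCadlag ξ) : (Disc ξ).Countable := by
  have hsub : Disc ξ ⊆ ⋃ n : ℕ, {t ∈ Icc (0:ℝ) 1 | 1 / ((n:ℝ) + 1) ≤ |ξ t - leftVal ξ t|} := by
    rintro t ⟨ht, hne⟩
    obtain ⟨n, hn⟩ := exists_nat_one_div_lt (abs_pos.2 (sub_ne_zero.2 hne))
    exact mem_iUnion.2 ⟨n, ht, hn.le⟩
  exact (countable_iUnion fun n =>
    (hξ.finite_setOf_le_abs_sub_leftVal (by positivity)).countable).mono hsub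

end IsCadlag

def jumpMass (s : Set ℕ) : ℝ := ∑' n, s.indicator (fun n => (1 / 2 : ℝ) ^ n) n

lemma summable_indicator_geometric (s : Set ℕ) :
    Summable (s.indicator fun n => (1 / 2 : ℝ) ^ n) :=
  summable_geometric_two.indicator s

lemma jumpMass_nonneg (s : Set ℕ) : 0 ≤ jumpMass s :=
  tsum_nonneg fun _ => indicator_nonneg (fun _ _ => by positivity) _

lemma jumpMass_le_two (s : Set ℕ) : jumpMass s ≤ 2 := by
  rw [← tsum_geometric_two]
  exact (summable_indicator_geometric s).tsum_le_tsum
    (indicator_le_self' fun _ _ => by positivity) summable_geometric_two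

lemma jumpMass_mono {s t : Set ℕ} (h : s ⊆ t) : jumpMass s ≤ jumpMass t :=
  (summable_indicator_geometric s).tsum_le_tsum
    (indicator_le_indicator_of_subset h fun _ => by positivity) (summable_indicator_geometric t)

lemma jumpMass_lt {s t : Set ℕ} (h : s ⊆ t) {n : ℕ} (hnt : n ∈ t) (hns : n ∉ s) :
    jumpMass s < jumpMass t := by
  refine (summable_indicator_geometric s).tsum_lt_tsum
    (indicator_le_indicator_of_subset h fun _ => by positivity) (i := n) ?_
    (summable_indicator_geometric t)
  rw [indicator_of_notMem hns, indicator_of_mem hnt]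
  positivity

lemma jumpMass_empty : jumpMass ∅ = 0 := by simp [jumpMass]

lemma tendsto_jumpMass {α : Type*} {l : Filter α} {s : α → Set ℕ} {s₀ : Set ℕ}
    (h : ∀ n, ∀ᶠ x in l, (n ∈ s x ↔ n ∈ s₀)) :
    Tendsto (fun x => jumpMass (s x)) l (𝓝 (jumpMass s₀)) := by
  refine tendsto_tsum_of_dominated_convergence summable_geometric_two (fun n => ?_)
    (Eventually.of_forall fun x n => ?_)
  · refine tendsto_const_nhds.congr' ((h n).mono fun x hx => ?_)
    by_cases hn : n ∈ s₀
    · exact (indicator_of_mem hn _).trans (indicator_of_mem (hx.2 hn) _).symm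
    · exact (indicator_of_notMem hn _).trans (indicator_of_notMem (mt hx.1 hn) _).symm
  · rw [Real.norm_of_nonneg (indicator_nonneg (fun _ _ => by positivity) _)]
    exact indicator_le_self' (fun _ _ => by positivity) n

section Stretch

variable (f : ℕ → ℝ)

def stretch (t : ℝ) : ℝ := t + jumpMass {n | f n ≤ t}

def stretchLeft (t : ℝ) : ℝ := t + jumpMass {n | f n < t}

def stretchInv (s : ℝ) : ℝ := sInf {t | s ≤ stretch f t}

variable {f}

lemma stretch_strictMono : StrictMono (stretch f) := fun _ _ h =>
  add_lt_add_of_lt_of_le h (jumpMass_mono fun n (hn : f n ≤ _) => show f n ≤ _ from hn.trans h.le)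

lemma stretchLeft_le_stretch (t : ℝ) : stretchLeft f t ≤ stretch f t :=
  add_le_add le_rfl (jumpMass_mono fun n (hn : f n < t) => show f n ≤ t from hn.le)

lemma stretch_lt_stretchLeft {t' t : ℝ} (h : t' < t) : stretch f t' < stretchLeft f t :=
  add_lt_add_of_lt_of_le h (jumpMass_mono fun n (hn : f n ≤ t') => show f n < t from hn.trans_lt h)

lemma stretchLeft_lt_stretch_of_mem_range {t : ℝ} (ht : t ∈ range f) :
    stretchLeft f t < stretch f t := by
  obtain ⟨n, rfl⟩ := ht
  exact add_lt_add_right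
    (jumpMass_lt (fun m (hm : f m < f n) => show f m ≤ f n from hm.le)
      (show f n ≤ f n from le_rfl) (show ¬ f n < f n from lt_irrefl _)) _

lemma stretchLeft_mono : Monotone (stretchLeft f) := fun _ _ h =>
  add_le_add h (jumpMass_mono fun n (hn : f n < _) => show f n < _ from hn.trans_le h)

lemma stretch_of_neg (hf : ∀ n, 0 ≤ f n) {t : ℝ} (ht : t < 0) : stretch f t = t := by
  have : {n | f n ≤ t} = ∅ := eq_empty_of_forall_notMem fun n hn => (hf n).not_gt (hn.trans_lt ht)
  rw [stretch, this, jumpMass_empty, add_zero]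

lemma stretchLeft_zero (hf : ∀ n, 0 ≤ f n) : stretchLeft f 0 = 0 := by
  have : {n | f n < 0} = ∅ := eq_empty_of_forall_notMem fun n hn => (hf n).not_gt hn
  rw [stretchLeft, this, jumpMass_empty, add_zero]

lemma tendsto_stretch_nhdsGT (t : ℝ) : Tendsto (stretch f) (𝓝[>] t) (𝓝 (stretch f t)) := by
  refine tendsto_nhdsWithin_of_tendsto_nhds tendsto_id |>.add (tendsto_jumpMass fun n => ?_)
  rcases le_or_gt (f n) t with h | h
  · exact eventually_nhdsWithin_of_forall fun x hx => iff_of_true (h.trans (le_of_lt hx)) h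
  · filter_upwards [Ioo_mem_nhdsGT h] with x hx using iff_of_false hx.2.not_ge h.not_ge

lemma tendsto_stretch_nhdsLT (t : ℝ) : Tendsto (stretch f) (𝓝[<] t) (𝓝 (stretchLeft f t)) := by
  refine tendsto_nhdsWithin_of_tendsto_nhds tendsto_id |>.add (tendsto_jumpMass fun n => ?_)
  rcases lt_or_ge (f n) t with h | h
  · filter_upwards [Ioo_mem_nhdsLT h] with x hx using iff_of_true hx.1.le h
  · exact eventually_nhdsWithin_of_forall fun x hx =>
      iff_of_false (not_le.2 (lt_of_lt_of_le hx h)) h.not_gt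

lemma nonempty_setOf_le_stretch (s : ℝ) : {t | s ≤ stretch f t}.Nonempty :=
  ⟨s, le_add_of_nonneg_right (jumpMass_nonneg _)⟩

lemma bddBelow_setOf_le_stretch (s : ℝ) : BddBelow {t | s ≤ stretch f t} :=
  ⟨s - 2, fun t ht => by linarith [show s ≤ t + jumpMass _ from ht, jumpMass_le_two {n | f n ≤ t}]⟩

lemma stretchInv_le {s t : ℝ} (h : s ≤ stretch f t) : stretchInv f s ≤ t :=
  csInf_le (bddBelow_setOf_le_stretch s) h

lemma le_stretchInv {s t : ℝ} (h : ∀ t', s ≤ stretch f t' → t ≤ t') : t ≤ stretchInv f s :=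
  le_csInf (nonempty_setOf_le_stretch s) h

lemma stretchInv_mono : Monotone (stretchInv f) := fun _ _ h =>
  le_stretchInv fun _ ht' => stretchInv_le (h.trans ht')

lemma stretchInv_stretch (t : ℝ) : stretchInv f (stretch f t) = t :=
  le_antisymm (stretchInv_le le_rfl) (le_stretchInv fun _ ht' => stretch_strictMono.le_iff_le.1 ht')

lemma continuous_stretchInv : Continuous (stretchInv f) :=
  stretchInv_mono.continuous_of_surjective fun t => ⟨_, stretchInv_stretch t⟩

lemma le_stretch_stretchInv (s : ℝ) : s ≤ stretch f (stretchInv f s) := by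
  refine ge_of_tendsto (tendsto_stretch_nhdsGT _) (eventually_nhdsWithin_of_forall fun t ht => ?_)
  obtain ⟨t', ht', ht't⟩ := exists_lt_of_csInf_lt (nonempty_setOf_le_stretch s) ht
  exact ht'.trans (stretch_strictMono.monotone ht't.le)

lemma stretchLeft_stretchInv_le (s : ℝ) : stretchLeft f (stretchInv f s) ≤ s := by
  refine le_of_tendsto (tendsto_stretch_nhdsLT _) (eventually_nhdsWithin_of_forall fun t ht => ?_)
  by_contra! h
  exact (not_le.2 (mem_Iio.1 ht)) (stretchInv_le h.le)

lemma stretchInv_nonneg (hf : ∀ n, 0 ≤ f n) {s : ℝ} (hs : 0 ≤ s) : 0 ≤ stretchInv f s :=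
  le_stretchInv fun _ ht' => not_lt.1 fun h => by
    rw [stretch_of_neg hf h] at ht'
    linarith

lemma stretchInv_eq {s t : ℝ} (h₁ : stretchLeft f t ≤ s) (h₂ : s ≤ stretch f t) :
    stretchInv f s = t :=
  le_antisymm (stretchInv_le h₂) <| le_stretchInv fun _ ht' =>
    not_lt.1 fun h => (stretch_lt_stretchLeft h).not_ge (h₁.trans ht')

end Stretch

lemma add_mul_sub_mem_uIcc {a b c : ℝ} (h₀ : 0 ≤ c) (h₁ : c ≤ 1) : a + c * (b - a) ∈ uIcc a b := by
  rcases le_total a b with h | h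
  · rw [uIcc_of_le h]; constructor <;> nlinarith
  · rw [uIcc_of_ge h]; constructor <;> nlinarith

section GraphParam

variable (ξ : ℝ → ℝ) (f : ℕ → ℝ)

/-- Where `s` lies in the fibre `[stretchLeft f t, stretch f t]`, as a fraction (`0` on a
degenerate fibre, where `x / 0 = 0`). -/
def fiberFrac (t s : ℝ) : ℝ := (s - stretchLeft f t) / (stretch f t - stretchLeft f t)

def fiberMap (t s : ℝ) : ℝ := leftVal ξ t + fiberFrac f t s * (ξ t - leftVal ξ t)

def graphParam (s : ℝ) : ℝ := fiberMap ξ f (stretchInv f s) s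

variable {ξ f}

lemma fiberFrac_nonneg {t s : ℝ} (hs : stretchLeft f t ≤ s) : 0 ≤ fiberFrac f t s :=
  div_nonneg (sub_nonneg.2 hs) (sub_nonneg.2 (stretchLeft_le_stretch t))

lemma fiberFrac_le_one {t s : ℝ} (hs : s ≤ stretch f t) : fiberFrac f t s ≤ 1 :=
  div_le_one_of_le₀ (sub_le_sub_right hs _) (sub_nonneg.2 (stretchLeft_le_stretch t))

lemma fiberFrac_mono (t : ℝ) : Monotone (fiberFrac f t) := fun _ _ hs =>
  div_le_div_of_nonneg_right (sub_le_sub_right hs _) (sub_nonneg.2 (stretchLeft_le_stretch t))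

lemma continuous_fiberMap (t : ℝ) : Continuous (fiberMap ξ f t) := by
  unfold fiberMap fiberFrac
  fun_prop

lemma graphParam_eq_fiberMap {s t : ℝ} (hs : s ∈ Icc (stretchLeft f t) (stretch f t)) :
    graphParam ξ f s = fiberMap ξ f t s := by
  rw [graphParam, stretchInv_eq hs.1 hs.2]

lemma graphParam_mem_uIcc (s : ℝ) :
    graphParam ξ f s ∈ uIcc (leftVal ξ (stretchInv f s)) (ξ (stretchInv f s)) :=
  add_mul_sub_mem_uIcc (fiberFrac_nonneg (stretchLeft_stretchInv_le s))
    (fiberFrac_le_one (le_stretch_stretchInv s))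

lemma abs_leftVal_sub_graphParam (s : ℝ) :
    |leftVal ξ (stretchInv f s) - graphParam ξ f s| =
      fiberFrac f (stretchInv f s) s * |ξ (stretchInv f s) - leftVal ξ (stretchInv f s)| := by
  rw [graphParam, fiberMap, sub_add_cancel_left, abs_neg, abs_mul,
    abs_of_nonneg (fiberFrac_nonneg (stretchLeft_stretchInv_le s))]

lemma graphParam_stretchLeft (t : ℝ) : graphParam ξ f (stretchLeft f t) = leftVal ξ t := by
  rw [graphParam_eq_fiberMap ⟨le_rfl, stretchLeft_le_stretch t⟩, fiberMap, fiberFrac, sub_self,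
    zero_div, zero_mul, add_zero]

lemma graphParam_stretch (hf : Disc ξ ⊆ range f) {t : ℝ} (ht : t ∈ Icc (0:ℝ) 1) :
    graphParam ξ f (stretch f t) = ξ t := by
  rw [graphParam_eq_fiberMap ⟨stretchLeft_le_stretch t, le_rfl⟩, fiberMap, fiberFrac]
  rcases (stretchLeft_le_stretch (f := f) t).lt_or_eq with hlt | heq
  · rw [div_self (sub_pos.2 hlt).ne', one_mul, add_sub_cancel]
  · have hcont : ξ t = leftVal ξ t := by
      by_contra hne
      exact (stretchLeft_lt_stretch_of_mem_range (hf ⟨ht, hne⟩)).ne heq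
    rw [← hcont, sub_self, mul_zero, add_zero]

end GraphParam

section GraphParamContinuity

variable {ξ : ℝ → ℝ} {f : ℕ → ℝ}

lemma continuousWithinAt_graphParam_Ici (hξ : IsCadlag ξ) (hf₀ : ∀ n, 0 ≤ f n)
    (hf : Disc ξ ⊆ range f) {s₀ : ℝ} (h₀ : 0 ≤ s₀) (h₁ : s₀ < stretch f 1) :
    ContinuousWithinAt (graphParam ξ f) (Ici s₀) s₀ := by
  set t₀ := stretchInv f s₀
  have ht₀ : t₀ ∈ Icc (0:ℝ) 1 := ⟨stretchInv_nonneg hf₀ h₀, stretchInv_le h₁.le⟩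
  rcases (show s₀ ≤ stretch f t₀ from le_stretch_stretchInv s₀).lt_or_eq with hlt | heq
  · have hfib : graphParam ξ f =ᶠ[𝓝[≥] s₀] fiberMap ξ f t₀ := by
      filter_upwards [Icc_mem_nhdsGE hlt] with s hs
      exact graphParam_eq_fiberMap ⟨(stretchLeft_stretchInv_le s₀).trans hs.1, hs.2⟩
    exact (continuous_fiberMap t₀).continuousWithinAt.congr_of_eventuallyEq hfib
      (hfib.eq_of_nhdsWithin self_mem_Ici)
  · have ht₀1 : t₀ < 1 := ht₀.2.lt_of_ne fun h => h₁.ne (by rw [heq, h])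
    have hv : Tendsto (stretchInv f) (𝓝[>] s₀) (𝓝[>] t₀) := by
      refine tendsto_nhdsWithin_iff.2 ⟨(continuous_stretchInv.tendsto s₀).mono_left
        nhdsWithin_le_nhds, eventually_nhdsWithin_of_forall fun s hs => ?_⟩
      refine mem_Ioi.2 (not_le.1 fun h => (mem_Ioi.1 hs).not_ge ?_)
      exact heq ▸ (le_stretch_stretchInv s).trans (stretch_strictMono.monotone h)
    have hval : graphParam ξ f s₀ = ξ t₀ := by rw [heq]; exact graphParam_stretch hf ht₀
    rw [← continuousWithinAt_Ioi_iff_Ici, ContinuousWithinAt, hval]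
    exact tendsto_of_mem_uIcc ((hξ.tendsto_leftVal_nhdsGT ⟨ht₀.1, ht₀1⟩).comp hv)
      ((hξ.tendsto_nhdsGT ⟨ht₀.1, ht₀1⟩).comp hv) (Eventually.of_forall graphParam_mem_uIcc)

lemma continuousWithinAt_graphParam_Iic (hξ : IsCadlag ξ) (hf₀ : ∀ n, 0 ≤ f n)
    {s₀ : ℝ} (h₀ : 0 < s₀) (h₁ : s₀ ≤ stretch f 1) :
    ContinuousWithinAt (graphParam ξ f) (Iic s₀) s₀ := by
  set t₀ := stretchInv f s₀
  rcases (show stretchLeft f t₀ ≤ s₀ from stretchLeft_stretchInv_le s₀).lt_or_eq with hlt | heq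
  · have hfib : graphParam ξ f =ᶠ[𝓝[≤] s₀] fiberMap ξ f t₀ := by
      filter_upwards [Icc_mem_nhdsLE hlt] with s hs
      exact graphParam_eq_fiberMap ⟨hs.1, hs.2.trans (le_stretch_stretchInv s₀)⟩
    exact (continuous_fiberMap t₀).continuousWithinAt.congr_of_eventuallyEq hfib
      (hfib.eq_of_nhdsWithin self_mem_Iic)
  · have ht₀ : t₀ ∈ Ioc (0:ℝ) 1 := by
      refine ⟨(stretchInv_nonneg hf₀ h₀.le).lt_of_ne fun h => h₀.ne ?_, stretchInv_le h₁⟩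
      rw [← heq, show t₀ = 0 from h.symm, stretchLeft_zero hf₀]
    have hv : Tendsto (stretchInv f) (𝓝[<] s₀) (𝓝[<] t₀) := by
      refine tendsto_nhdsWithin_iff.2 ⟨(continuous_stretchInv.tendsto s₀).mono_left
        nhdsWithin_le_nhds, eventually_nhdsWithin_of_forall fun s hs => ?_⟩
      refine mem_Iio.2 (not_le.1 fun h => (mem_Iio.1 hs).not_ge ?_)
      exact heq ▸ (stretchLeft_mono h).trans (stretchLeft_stretchInv_le s)
    have hval : graphParam ξ f s₀ = Function.leftLim ξ t₀ := by
      rw [← heq, graphParam_stretchLeft, leftVal_of_ne_zero ξ ht₀.1.ne']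
    rw [← continuousWithinAt_Iio_iff_Iic, ContinuousWithinAt, hval]
    exact tendsto_of_mem_uIcc ((hξ.tendsto_leftVal_nhdsLT ht₀).comp hv)
      ((hξ.tendsto_nhdsLT ht₀).comp hv) (Eventually.of_forall graphParam_mem_uIcc)

lemma continuousOn_graphParam (hξ : IsCadlag ξ) (hf₀ : ∀ n, 0 ≤ f n) (hf : Disc ξ ⊆ range f) :
    ContinuousOn (graphParam ξ f) (Icc 0 (stretch f 1)) := by
  intro s hs
  have hR : ContinuousWithinAt (graphParam ξ f) (Icc 0 (stretch f 1) ∩ Ici s) s := by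
    rcases hs.2.lt_or_eq with h | rfl
    · exact (continuousWithinAt_graphParam_Ici hξ hf₀ hf hs.1 h).mono inter_subset_right
    · exact continuousWithinAt_singleton.mono fun x hx => le_antisymm hx.1.2 hx.2
  have hL : ContinuousWithinAt (graphParam ξ f) (Icc 0 (stretch f 1) ∩ Iic s) s := by
    rcases hs.1.lt_or_eq with h | rfl
    · exact (continuousWithinAt_graphParam_Iic hξ hf₀ h hs.2).mono inter_subset_right
    · exact continuousWithinAt_singleton.mono fun x hx => le_antisymm hx.2 hx.1.1
  exact (hL.union hR).mono fun x hx => (le_total x s).imp (⟨hx, ·⟩) (⟨hx, ·⟩)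

end GraphParamContinuity

section ParamRepExistence

variable {ξ : ℝ → ℝ} {f : ℕ → ℝ}

lemma graphParam_mem_extGraph (hf₀ : ∀ n, 0 ≤ f n) {s : ℝ} (hs : s ∈ Icc 0 (stretch f 1)) :
    (graphParam ξ f s, stretchInv f s) ∈ extGraph ξ :=
  ⟨⟨stretchInv_nonneg hf₀ hs.1, stretchInv_le hs.2⟩, graphParam_mem_uIcc s⟩

lemma exists_graphParam_eq (hξ : IsCadlag ξ) (hf₀ : ∀ n, 0 ≤ f n) (hf : Disc ξ ⊆ range f)
    {p : ℝ × ℝ} (hp : p ∈ extGraph ξ) :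
    ∃ s ∈ Icc 0 (stretch f 1), graphParam ξ f s = p.1 ∧ stretchInv f s = p.2 := by
  obtain ⟨ht, hx⟩ := hp
  have hfib : Icc (stretchLeft f p.2) (stretch f p.2) ⊆ Icc 0 (stretch f 1) := fun s hs =>
    ⟨(stretchLeft_zero hf₀ ▸ stretchLeft_mono ht.1).trans hs.1,
      hs.2.trans (stretch_strictMono.monotone ht.2)⟩
  rw [← uIcc_of_le (stretchLeft_le_stretch p.2)] at hfib
  have hx' :
      p.1 ∈ uIcc (graphParam ξ f (stretchLeft f p.2)) (graphParam ξ f (stretch f p.2)) := by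
    rwa [graphParam_stretchLeft, graphParam_stretch hf ht]
  obtain ⟨s, hs, hsx⟩ :=
    intermediate_value_uIcc ((continuousOn_graphParam hξ hf₀ hf).mono hfib) hx'
  rw [uIcc_of_le (stretchLeft_le_stretch p.2)] at hs hfib
  exact ⟨s, hfib hs, hsx, stretchInv_eq hs.1 hs.2⟩

lemma graphParam_order {s₁ s₂ : ℝ} (hs : s₁ ≤ s₂) :
    stretchInv f s₁ < stretchInv f s₂ ∨ (stretchInv f s₁ = stretchInv f s₂ ∧
      |leftVal ξ (stretchInv f s₁) - graphParam ξ f s₁| ≤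
        |leftVal ξ (stretchInv f s₂) - graphParam ξ f s₂|) := by
  refine (stretchInv_mono hs).lt_or_eq.imp_right fun h => ⟨h, ?_⟩
  rw [abs_leftVal_sub_graphParam, abs_leftVal_sub_graphParam, h]
  exact mul_le_mul_of_nonneg_right (fiberFrac_mono _ hs) (abs_nonneg _)

/-- `f` enumerates the jump times together with `0`; the pair `(graphParam ξ f, stretchInv f)`
traverses the graph on `[0, stretch f 1]`, which is rescaled to `[0, 1]`. -/
theorem IsCadlag.exists_paramRep (hξ : IsCadlag ξ) : ∃ u v : ℝ → ℝ, ParamRep ξ u v := by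
  obtain ⟨f, hf⟩ :=
    (hξ.countable_disc.union (countable_singleton 0)).exists_eq_range ⟨0, Or.inr rfl⟩
  have hf₀ : ∀ n, 0 ≤ f n := fun n => by
    rcases hf.symm ▸ mem_range_self n with h | h
    exacts [h.1.1, h.ge]
  have hDisc : Disc ξ ⊆ range f := hf ▸ subset_union_left
  set A := stretch f 1
  have hA : 0 < A := zero_lt_one.trans_le (le_add_of_nonneg_right (jumpMass_nonneg _))
  have himage : (A * ·) '' Icc (0:ℝ) 1 = Icc 0 A := by
    rw [image_mul_left_Icc hA.le zero_le_one, mul_zero, mul_one]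
  refine ⟨fun σ => graphParam ξ f (A * σ), fun σ => stretchInv f (A * σ),
    (continuousOn_graphParam hξ hf₀ hDisc).comp (by fun_prop) (himage ▸ mapsTo_image _ _),
    (continuous_stretchInv.comp (continuous_const_mul A)).continuousOn, ?_,
    fun σ₁ _ σ₂ _ hσ => graphParam_order (mul_le_mul_of_nonneg_left hσ hA.le)⟩
  rw [← image_image (fun s => (graphParam ξ f s, stretchInv f s)) (A * ·), himage]
  refine Subset.antisymm (image_subset_iff.2 fun s hs => graphParam_mem_extGraph hf₀ hs)
    fun p hp => ?_
  obtain ⟨s, hs, h₁, h₂⟩ := exists_graphParam_eq hξ hf₀ hDisc hp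
  exact ⟨s, hs, Prod.ext h₁ h₂⟩

end ParamRepExistence

lemma eq_of_mem_uIcc_of_abs_sub_le {a b x : ℝ} (hx : x ∈ uIcc a b) (h : |b - a| ≤ |x - a|) :
    x = b := by
  rcases le_total a b with hab | hab
  · rw [uIcc_of_le hab] at hx
    rw [abs_of_nonneg (sub_nonneg.2 hab), abs_of_nonneg (sub_nonneg.2 hx.1)] at h
    linarith [hx.2]
  · rw [uIcc_of_ge hab] at hx
    rw [abs_of_nonpos (sub_nonpos.2 hab), abs_of_nonpos (sub_nonpos.2 hx.2)] at h
    linarith [hx.1]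

lemma self_mem_extGraph {t : ℝ} (ht : t ∈ Icc (0:ℝ) 1) : (ξ t, t) ∈ extGraph ξ :=
  ⟨ht, min_le_right _ _, le_max_right _ _⟩

namespace ParamRep

lemma mem_extGraph (h : ParamRep ξ u v) {s : ℝ} (hs : s ∈ Icc (0:ℝ) 1) :
    (u s, v s) ∈ extGraph ξ :=
  h.2.2.1 ▸ mem_image_of_mem _ hs

lemma exists_eq (h : ParamRep ξ u v) {p : ℝ × ℝ} (hp : p ∈ extGraph ξ) :
    ∃ s ∈ Icc (0:ℝ) 1, u s = p.1 ∧ v s = p.2 := by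
  obtain ⟨s, hs, rfl⟩ := h.2.2.1.symm ▸ hp
  exact ⟨s, hs, rfl, rfl⟩

lemma monotoneOn (h : ParamRep ξ u v) : MonotoneOn v (Icc 0 1) := fun _ h₁ _ h₂ hs =>
  (h.2.2.2 _ h₁ _ h₂ hs).elim le_of_lt fun h' => h'.1.le

lemma apply_one_snd (h : ParamRep ξ u v) : v 1 = 1 := by
  obtain ⟨s, hs, -, hv : v s = 1⟩ :=
    h.exists_eq (self_mem_extGraph (ξ := ξ) ⟨zero_le_one, le_rfl⟩)
  exact le_antisymm (h.mem_extGraph ⟨zero_le_one, le_rfl⟩).1.2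
    (hv.symm.le.trans (h.monotoneOn hs ⟨zero_le_one, le_rfl⟩ hs.2))

/-- The order on the segment over `t = 1` puts `ξ 1` last. -/
lemma apply_one_fst (h : ParamRep ξ u v) : u 1 = ξ 1 := by
  have h1 : (1:ℝ) ∈ Icc (0:ℝ) 1 := ⟨zero_le_one, le_rfl⟩
  obtain ⟨s, hs, hu, hv⟩ := h.exists_eq (self_mem_extGraph (ξ := ξ) h1)
  have hmem := (h.mem_extGraph h1).2
  simp only [h.apply_one_snd] at hmem hu hv
  rcases h.2.2.2 s hs 1 h1 hs.2 with hlt | ⟨-, hle⟩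
  · exact absurd hlt (by rw [hv, h.apply_one_snd]; exact lt_irrefl 1)
  · rw [hv, hu, h.apply_one_snd, abs_sub_comm, abs_sub_comm _ (u 1)] at hle
    exact eq_of_mem_uIcc_of_abs_sub_le hmem hle

lemma bddBelow_range (h : ParamRep ξ u v) : BddBelow (range fun t : Icc (0:ℝ) 1 => ξ t) := by
  obtain ⟨c, hc⟩ := isCompact_Icc.bddBelow_image h.1
  refine ⟨c, ?_⟩
  rintro _ ⟨t, rfl⟩
  obtain ⟨s, hs, hu : u s = ξ t, -⟩ := h.exists_eq (self_mem_extGraph t.2)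
  exact (hc (mem_image_of_mem u hs)).trans_eq hu

end ParamRep

lemma le_iSup_Icc_of_continuousOn {g : ℝ → ℝ} (hg : ContinuousOn g (Icc 0 1)) {s : ℝ}
    (hs : s ∈ Icc (0:ℝ) 1) : g s ≤ ⨆ x : Icc (0:ℝ) 1, g x :=
  le_ciSup (image_eq_range g _ ▸ isCompact_Icc.bddAbove_image hg) ⟨s, hs⟩

lemma le_dM1 (hξ : IsCadlag ξ) (hζ : IsCadlag ζ) {c : ℝ}
    (h : ∀ u₁ v₁ u₂ v₂ : ℝ → ℝ, ∀ d, ParamRep ξ u₁ v₁ → ParamRep ζ u₂ v₂ →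
      (∀ s ∈ Icc (0:ℝ) 1, |u₁ s - u₂ s| ≤ d) → c ≤ d) :
    c ≤ dM1 ξ ζ := by
  obtain ⟨u₁, v₁, h₁⟩ := hξ.exists_paramRep
  obtain ⟨u₂, v₂, h₂⟩ := hζ.exists_paramRep
  refine le_csInf ⟨_, u₁, v₁, u₂, v₂, h₁, h₂, rfl⟩ ?_
  rintro _ ⟨u₁, v₁, u₂, v₂, h₁, h₂, rfl⟩
  exact h u₁ v₁ u₂ v₂ _ h₁ h₂ fun s hs =>
    (le_iSup_Icc_of_continuousOn (h₁.1.sub h₂.1).abs hs).trans (le_max_left _ _)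

lemma abs_sub_apply_one_le_dM1 (hξ : IsCadlag ξ) (hζ : IsCadlag ζ) :
    |ξ 1 - ζ 1| ≤ dM1 ξ ζ :=
  le_dM1 hξ hζ fun _ _ _ _ _ h₁ h₂ hd => by
    simpa only [h₁.apply_one_fst, h₂.apply_one_fst] using hd 1 ⟨zero_le_one, le_rfl⟩

/-- `min (m ξ) 0` is the infimum of the extended graph, `0` coming from `ξ(0⁻) = 0`. -/
lemma min_iInf_le_of_mem_extGraph (hξ : IsCadlag ξ)
    (hb : BddBelow (range fun t : Icc (0:ℝ) 1 => ξ t)) {p : ℝ × ℝ} (hp : p ∈ extGraph ξ) :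
    min (⨅ t : Icc (0:ℝ) 1, ξ t) 0 ≤ p.1 := by
  obtain ⟨ht, hx⟩ := hp
  have hξm : ∀ t ∈ Icc (0:ℝ) 1, min (⨅ t : Icc (0:ℝ) 1, ξ t) 0 ≤ ξ t := fun t ht =>
    (min_le_left _ _).trans (ciInf_le hb ⟨t, ht⟩)
  have hleft : min (⨅ t : Icc (0:ℝ) 1, ξ t) 0 ≤ leftVal ξ p.2 := by
    rcases ht.1.eq_or_lt with h | h
    · rw [← h, leftVal_zero]
      exact min_le_right _ _
    · rw [leftVal_of_ne_zero ξ h.ne']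
      refine ge_of_tendsto (hξ.tendsto_nhdsLT ⟨h, ht.2⟩) ?_
      filter_upwards [Ioo_mem_nhdsLT h] with y hy using hξm y ⟨hy.1.le, hy.2.le.trans ht.2⟩
  exact (le_min hleft (hξm _ ht)).trans hx.1

lemma min_iInf_le_add_dM1 (hξ : IsCadlag ξ) (hζ : IsCadlag ζ) :
    min (⨅ t : Icc (0:ℝ) 1, ζ t) 0 ≤ min (⨅ t : Icc (0:ℝ) 1, ξ t) 0 + dM1 ξ ζ := by
  rw [← sub_le_iff_le_add']
  refine le_dM1 hξ hζ fun u₁ v₁ u₂ v₂ d h₁ h₂ hd => ?_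
  have hd₀ : 0 ≤ d := (abs_nonneg _).trans (hd 0 ⟨le_rfl, zero_le_one⟩)
  suffices min (⨅ t : Icc (0:ℝ) 1, ζ t) 0 - d ≤ min (⨅ t : Icc (0:ℝ) 1, ξ t) 0 by linarith
  refine le_min (le_ciInf fun t => ?_) (by linarith [min_le_right (⨅ t : Icc (0:ℝ) 1, ζ t) 0])
  obtain ⟨s, hs, hu, -⟩ := h₁.exists_eq (self_mem_extGraph t.2)
  have hζs := min_iInf_le_of_mem_extGraph hζ h₂.bddBelow_range (h₂.mem_extGraph hs)
  have hds := abs_le.1 (hd s hs)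
  simp only at hu hζs
  linarith

lemma exists_mem_Ico_of_le_of_lt {t : ℕ → ℝ} {m : ℕ} {s : ℝ} (h₀ : t 0 ≤ s) (hm : s < t m) :
    ∃ i < m, s ∈ Ico (t i) (t (i + 1)) := by
  induction m with
  | zero => exact absurd (h₀.trans_lt hm) (lt_irrefl _)
  | succ k ih =>
    by_cases hk : t k ≤ s
    · exact ⟨k, k.lt_succ_self, hk, hm⟩
    · obtain ⟨i, hi, his⟩ := ih (not_le.1 hk)
      exact ⟨i, hi.trans k.lt_succ_self, his⟩

lemma exists_mem_Ioc_of_lt_of_le {t : ℕ → ℝ} {m : ℕ} {s : ℝ} (h₀ : t 0 < s) (hm : s ≤ t m) :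
    ∃ i < m, s ∈ Ioc (t i) (t (i + 1)) := by
  induction m with
  | zero => exact absurd (h₀.trans_le hm) (lt_irrefl _)
  | succ k ih =>
    by_cases hk : t k < s
    · exact ⟨k, k.lt_succ_self, hk, hm⟩
    · obtain ⟨i, hi, his⟩ := ih (not_lt.1 hk)
      exact ⟨i, hi.trans k.lt_succ_self, his⟩

lemma exists_ne_succ_of_ne {α : Type*} {a : ℕ → α} {i j : ℕ} (hij : i ≤ j) (h : a i ≠ a j) :
    ∃ k, i ≤ k ∧ k < j ∧ a k ≠ a (k + 1) := by
  induction j, hij using Nat.le_induction with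
  | base => exact absurd rfl h
  | succ j hij ih =>
    by_cases hj : a i = a j
    · exact ⟨j, hij, j.lt_succ_self, hj ▸ h⟩
    · obtain ⟨k, hik, hkj, hk⟩ := ih hj
      exact ⟨k, hik, hkj.trans j.lt_succ_self, hk⟩

lemma eq_first_or_eq_last_of_subsingleton_changes {α : Type*} {a : ℕ → α} {N : ℕ}
    (h : ∀ i < N, ∀ j < N, a i ≠ a (i + 1) → a j ≠ a (j + 1) → i = j) {j : ℕ} (hj : j ≤ N) :
    a j = a 0 ∨ a j = a N := by
  by_contra! hne
  obtain ⟨k₁, -, hk₁j, hk₁⟩ := exists_ne_succ_of_ne (Nat.zero_le j) (Ne.symm hne.1)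
  obtain ⟨k₂, hjk₂, hk₂N, hk₂⟩ := exists_ne_succ_of_ne hj hne.2
  exact absurd (h k₁ (by omega) k₂ hk₂N hk₁ hk₂) (by omega)

lemma IsCadlag.continuous_add (hξ : IsCadlag ξ) {h : ℝ → ℝ} (hh : Continuous h) :
    IsCadlag fun t => h t + ξ t :=
  ⟨fun t ht => ((hh.tendsto t).mono_left nhdsWithin_le_nhds).add (hξ.1 t ht), fun t ht =>
    let ⟨l, hl⟩ := hξ.2 t ht
    ⟨h t + l, ((hh.tendsto t).mono_left nhdsWithin_le_nhds).add hl⟩⟩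

namespace PiecewiseConstant

variable {g : ℝ → ℝ}

lemma isCadlag (hg : PiecewiseConstant g) : IsCadlag g := by
  obtain ⟨m, t, -, h0, h1, hlt, hconst⟩ := hg
  constructor
  · intro s hs
    obtain ⟨i, hi, his⟩ := exists_mem_Ico_of_le_of_lt (h0 ▸ hs.1) (h1 ▸ hs.2)
    refine tendsto_const_nhds.congr' ?_
    filter_upwards [Ioo_mem_nhdsGT his.2] with x hx
      using hconst i hi s his x ⟨his.1.trans hx.1.le, hx.2⟩
  · intro s hs
    obtain ⟨i, hi, his⟩ := exists_mem_Ioc_of_lt_of_le (h0 ▸ hs.1) (h1 ▸ hs.2)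
    refine ⟨g (t i), tendsto_const_nhds.congr' ?_⟩
    filter_upwards [Ioo_mem_nhdsLT his.1] with x hx
      using hconst i hi (t i) ⟨le_rfl, hlt i hi⟩ x ⟨hx.1.le, hx.2.trans_le his.2⟩

/-- With fewer than two jumps, the values `g(t_k⁻)` and `g(t_k)` at the partition points change at
most once, from `g(0⁻) = 0` to `g(1)`. -/
lemma eq_zero_or_eq_apply_one (hg : g ∈ Dll 2) {s : ℝ} (hs : s ∈ Icc (0:ℝ) 1) :
    g s = 0 ∨ g s = g 1 := by
  obtain ⟨⟨m, t, -, h0, h1, hlt, hconst⟩, hfin, hcard⟩ := hg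
  have hmono : StrictMonoOn t (Iic m) := strictMonoOn_Iic_of_lt_succ hlt
  have hmem : ∀ k ≤ m, t k ∈ Icc (0:ℝ) 1 := fun k hk => ⟨h0 ▸ hmono.monotoneOn
    (Nat.zero_le m) hk (Nat.zero_le k), h1 ▸ hmono.monotoneOn hk (mem_Iic.2 le_rfl) hk⟩
  set a : ℕ → ℝ := fun j => if j ≤ m then leftVal g (t j) else g 1
  have ha0 : a 0 = 0 := by simp [a, h0, leftVal_zero]
  have hsucc : ∀ k ≤ m, a (k + 1) = g (t k) := by
    intro k hk
    rcases hk.lt_or_eq with hk | rfl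
    · have hpos : 0 < t (k + 1) := (hmem k hk.le).1.trans_lt (hlt k hk)
      simp only [a, show k + 1 ≤ m from hk, if_true, leftVal_of_ne_zero g hpos.ne']
      refine leftLim_eq_of_tendsto (tendsto_const_nhds.congr' ?_)
      filter_upwards [Ioo_mem_nhdsLT (hlt k hk)] with x hx
        using hconst k hk (t k) ⟨le_rfl, hlt k hk⟩ x ⟨hx.1.le, hx.2⟩
    · simp [a, h1]
  have hchange : ∀ k < m + 1, a k ≠ a (k + 1) → t k ∈ Disc g := fun k hk hne =>
    ⟨hmem k (by omega), by simpa [a, show k ≤ m by omega, hsucc k (by omega)] using hne.symm⟩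
  have hone : ∀ i < m + 1, ∀ j < m + 1, a i ≠ a (i + 1) → a j ≠ a (j + 1) → i = j :=
    fun i hi j hj hai haj => hmono.injOn (show i ≤ m by omega) (show j ≤ m by omega) <|
      (ncard_le_one hfin).1 (by omega) _ (hchange i hi hai) _ (hchange j hj haj)
  have hvals : ∀ k ≤ m, g (t k) = 0 ∨ g (t k) = g 1 := fun k hk => by
    have := eq_first_or_eq_last_of_subsingleton_changes hone (show k + 1 ≤ m + 1 by omega)
    rwa [hsucc k hk, ha0, hsucc m le_rfl, h1] at this
  rcases hs.2.lt_or_eq with hs1 | rfl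
  · obtain ⟨i, hi, his⟩ := exists_mem_Ico_of_le_of_lt (h0 ▸ hs.1) (h1 ▸ hs1)
    rw [hconst i hi s his (t i) ⟨le_rfl, hlt i hi⟩]
    exact hvals i hi.le
  · exact Or.inr rfl

end PiecewiseConstant

lemma min_le_iInf_of_mem_Dll_two {g : ℝ → ℝ} (hg : g ∈ Dll 2) (hg₁ : 0 ≤ g 1) (mu : ℝ) :
    min mu 0 ≤ ⨅ t : Icc (0:ℝ) 1, mu * t + g t := by
  refine le_ciInf fun t => ?_
  have hmu : min mu 0 ≤ mu * t := by
    rcases le_total 0 mu with h | h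
    · exact (min_le_right _ _).trans (mul_nonneg h t.2.1)
    · exact (min_le_left _ _).trans (by nlinarith [t.2.2])
  rcases PiecewiseConstant.eq_zero_or_eq_apply_one hg t.2 with h | h <;> rw [h] <;> linarith

lemma le_apply_one_of_tendsto_dM1 {ξ : ℕ → ℝ → ℝ} {a : ℝ} (hξ : ∀ n, IsCadlag (ξ n))
    (ha : ∀ n, a ≤ ξ n 1) (hζ : IsCadlag ζ) (hlim : Tendsto (fun n => dM1 (ξ n) ζ) atTop (𝓝 0)) :
    a ≤ ζ 1 := by
  have := le_of_tendsto' (tendsto_const_nhds.sub hlim) fun n =>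
    show a - dM1 (ξ n) ζ ≤ ζ 1 by
      linarith [ha n, (abs_le.1 (abs_sub_apply_one_le_dM1 (hξ n) hζ)).2]
  simpa using this

lemma iInf_le_of_tendsto_dM1 {ξ : ℕ → ℝ → ℝ} {a : ℝ} (ha₀ : 0 < a) (hξ : ∀ n, IsCadlag (ξ n))
    (ha : ∀ n, (⨅ t : Icc (0:ℝ) 1, ξ n t) ≤ -a) (hζ : IsCadlag ζ)
    (hlim : Tendsto (fun n => dM1 (ξ n) ζ) atTop (𝓝 0)) :
    (⨅ t : Icc (0:ℝ) 1, ζ t) ≤ -a := by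
  have hlim' : Tendsto (fun n => -a + dM1 (ξ n) ζ) atTop (𝓝 (-a)) := by
    simpa using tendsto_const_nhds.add hlim
  have := ge_of_tendsto' (b := min (⨅ t : Icc (0:ℝ) 1, ζ t) 0) hlim' fun n => by
    linarith [min_iInf_le_add_dM1 (hξ n) hζ, (min_le_left _ 0).trans (ha n)]
  exact (min_le_iff.1 this).resolve_right (by linarith)

lemma le_dM1_of_mem_DllZ_two {mu aP aM : ℝ} (hξ : IsCadlag ξ) (hP : aP ≤ ξ 1)
    (hM : (⨅ t : Icc (0:ℝ) 1, ξ t) ≤ -aM) (hζ : ζ ∈ DllZ mu 2) :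
    min (aP - mu) (aM + min mu 0) ≤ dM1 ξ ζ := by
  obtain ⟨g, hg, rfl⟩ := hζ
  have hζ : IsCadlag fun t => mu * t + g t :=
    hg.1.isCadlag.continuous_add (continuous_const.mul continuous_id)
  by_contra! hd
  have hend := abs_le.1 (abs_sub_apply_one_le_dM1 hξ hζ)
  have hg₁ : 0 ≤ g 1 := by linarith [min_le_left (aP - mu) (aM + min mu 0)]
  have hlow := le_min (min_le_iInf_of_mem_Dll_two hg hg₁ mu) (min_le_right mu 0)
  linarith [min_iInf_le_add_dM1 hξ hζ, (min_le_left _ 0).trans hM,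
    min_le_right (aP - mu) (aM + min mu 0)]

end

/-- **Barrier-option rare-event set (Section 4)**: for `aP > max{μ,0}` and `aM > max{−μ,0}`,
the set `E = {ξ : ξ(1) ≥ aP, inf_{t∈[0,1]} ξ(t) ≤ −aM}` is (sequentially) closed in the `M₁'`
topology on `D[0,1]`, and is bounded away in `d_{M₁'}` from `D̲^μ_{≪2}` (the functions
`μt + x·1_{[y,1]}(t)` together with `μt`). -/
theorem barrier_set_closed_and_bounded_away
    (mu aP aM : ℝ) (haP : max mu 0 < aP) (haM : max (-mu) 0 < aM) :
    (∀ (ξ : ℕ → ℝ → ℝ) (ζ : ℝ → ℝ),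
      (∀ n, IsCadlag (ξ n) ∧ aP ≤ ξ n 1 ∧ (⨅ t : Icc (0:ℝ) 1, ξ n t) ≤ -aM) →
      IsCadlag ζ →
      Filter.Tendsto (fun n => dM1 (ξ n) ζ) Filter.atTop (nhds 0) →
      aP ≤ ζ 1 ∧ (⨅ t : Icc (0:ℝ) 1, ζ t) ≤ -aM) ∧
    ∃ r > (0:ℝ), ∀ ξ₁ : ℝ → ℝ, IsCadlag ξ₁ → aP ≤ ξ₁ 1 → (⨅ t : Icc (0:ℝ) 1, ξ₁ t) ≤ -aM →
      ∀ ξ₂ ∈ DllZ mu 2, r ≤ dM1 ξ₁ ξ₂ := by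
  have hmuP : mu < aP := (le_max_left _ _).trans_lt haP
  have hM₀ : 0 < aM := (le_max_right _ _).trans_lt haM
  have hmuM : 0 < aM + min mu 0 := by
    rcases min_choice mu 0 with h | h <;> rw [h] <;> linarith [(le_max_left (-mu) 0).trans_lt haM]
  refine ⟨fun ξ ζ hξ hζ hlim => ⟨?_, ?_⟩, min (aP - mu) (aM + min mu 0),
    lt_min (sub_pos.2 hmuP) hmuM, fun ξ₁ hξ₁ hP hM ξ₂ hξ₂ => le_dM1_of_mem_DllZ_two hξ₁ hP hM hξ₂⟩
  · exact le_apply_one_of_tendsto_dM1 (fun n => (hξ n).1) (fun n => (hξ n).2.1) hζ hlim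
  · exact iInf_le_of_tendsto_dM1 hM₀ (fun n => (hξ n).1) (fun n => (hξ n).2.2) hζ hlim
end
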